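/- arXiv:1906.03398 — 10 statements merged into one kernel-verified Lean document; each statement's English description precedes it below -/
import Mathlib

section
/- Let q > 0 be real and β ∈ ℝ. If f : [0,1] → ℂ is twice continuously differentiable and satisfies f''(x) = -β·f(x) for all x ∈ [0,1], f'(0) = -i·q·f(0), and f'(1) = 0, then f is identically zero on [0,1]. -/
open Set

/-- The operator `Af = -i f''` with boundary conditions `f'(0) = -i q f(0)`, `f'(1) = 0`
(`q > 0`) has no eigenvalues on the imaginary axis: the boundary value problem
`f'' = -β f` with these boundary conditions has only the zero solution. -/
theorem stmt_1 (q β : ℝ) (hq : 0 < q) (f : ℝ → ℂ)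
    (hf : ContDiffOn ℝ 2 f (Set.Icc 0 1))
    (hode : ∀ x ∈ Set.Icc (0:ℝ) 1,
      derivWithin (derivWithin f (Set.Icc 0 1)) (Set.Icc 0 1) x = -(β : ℂ) * f x)
    (hbc0 : derivWithin f (Set.Icc 0 1) 0 = -Complex.I * (q : ℂ) * f 0)
    (hbc1 : derivWithin f (Set.Icc 0 1) 1 = 0) :
    ∀ x ∈ Set.Icc (0:ℝ) 1, f x = 0 := by
  have hu : UniqueDiffOn ℝ (Icc (0:ℝ) 1) := uniqueDiffOn_Icc one_pos
  set f1 := derivWithin f (Icc (0:ℝ) 1) with hf1def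
  have hf1c : ContDiffOn ℝ 1 f1 (Icc 0 1) := hf.derivWithin hu (by norm_num)
  have hfd : DifferentiableOn ℝ f (Icc 0 1) := hf.differentiableOn (by norm_num)
  have hf1d : DifferentiableOn ℝ f1 (Icc 0 1) := hf1c.differentiableOn (by norm_num)
  have hder : ∀ x ∈ Icc (0:ℝ) 1, HasDerivWithinAt f (f1 x) (Icc 0 1) x := by
    intro x hx
    have := (hfd x hx).hasDerivWithinAt
    rwa [← hf1def] at this
  have hder2 : ∀ x ∈ Icc (0:ℝ) 1, HasDerivWithinAt f1 (-(β:ℂ) * f x) (Icc 0 1) x := by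
    intro x hx
    have := (hf1d x hx).hasDerivWithinAt
    rwa [hode x hx] at this
  -- Step 1: W = Im(f1 * conj f) is constant
  set W : ℝ → ℝ := fun x => (f1 x * (starRingEnd ℂ) (f x)).im with hW
  have hWder : ∀ x ∈ Icc (0:ℝ) 1, HasDerivWithinAt W 0 (Icc 0 1) x := by
    intro x hx
    have hmul : HasDerivWithinAt (fun y => f1 y * (starRingEnd ℂ) (f y))
        ((-(β:ℂ) * f x) * (starRingEnd ℂ) (f x) + f1 x * (starRingEnd ℂ) (f1 x))
        (Icc 0 1) x := (hder2 x hx).mul ((hder x hx).star)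
    have him := (Complex.imCLM.hasFDerivAt.comp_hasDerivWithinAt x hmul)
    have hzero : Complex.imCLM ((-(β:ℂ) * f x) * (starRingEnd ℂ) (f x)
        + f1 x * (starRingEnd ℂ) (f1 x)) = 0 := by
      simp only [map_add, Complex.imCLM_apply]
      rw [mul_assoc, Complex.mul_conj, Complex.mul_conj]
      simp
    rw [hzero] at him
    exact him
  have hWconst : ∀ x ∈ Icc (0:ℝ) 1, W x = W 0 := by
    apply constant_of_derivWithin_zero
    · intro x hx
      exact (hWder x hx).differentiableWithinAt
    · intro x hx
      exact ((hWder x (Ico_subset_Icc_self hx)).derivWithin (hu x (Ico_subset_Icc_self hx)))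
  have hW1 : W 1 = W 0 := hWconst 1 (by norm_num)
  have hW1z : W 1 = 0 := by simp [hW, ← hf1def, hbc1]
  have hW0 : W 0 = -q * Complex.normSq (f 0) := by
    simp only [hW, ← hf1def, hbc0]
    rw [mul_assoc, Complex.mul_conj]
    simp [mul_comm]
  have hf0 : f 0 = 0 := by
    have : q * Complex.normSq (f 0) = 0 := by
      have := hW1z.symm.trans hW1
      rw [hW0] at this
      linarith
    have hnz : Complex.normSq (f 0) = 0 := by
      rcases mul_eq_zero.1 this with h | h
      · exact absurd h (ne_of_gt hq)
      · exact h
    exact Complex.normSq_eq_zero.1 hnz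
  have hf10 : f1 0 = 0 := by rw [hbc0, hf0, mul_zero]
  -- Step 2: uniqueness for the first-order system
  set L : (ℂ × ℂ) →L[ℝ] (ℂ × ℂ) :=
    (ContinuousLinearMap.snd ℝ ℂ ℂ).prod
      ((-(β:ℂ)) • ContinuousLinearMap.fst ℝ ℂ ℂ) with hL
  set F : ℝ → ℂ × ℂ := fun x => (f x, f1 x) with hF
  have hFcont : ContinuousOn F (Icc 0 1) :=
    (ContinuousOn.prodMk hf.continuousOn hf1c.continuousOn)
  have hFder : ∀ t ∈ Ico (0:ℝ) 1, HasDerivWithinAt F (L (F t)) (Ici t) t := by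
    intro t ht
    have h1 : HasDerivWithinAt F (f1 t, -(β:ℂ) * f t) (Icc 0 1) t :=
      (hder t (Ico_subset_Icc_self ht)).prodMk (hder2 t (Ico_subset_Icc_self ht))
    have h2 : HasDerivWithinAt F (f1 t, -(β:ℂ) * f t) (Ici t) t :=
      h1.mono_of_mem_nhdsWithin (Icc_mem_nhdsGE_of_mem ht)
    exact h2
  have hGder : ∀ t ∈ Ico (0:ℝ) 1,
      HasDerivWithinAt (fun _ : ℝ => ((0:ℂ), (0:ℂ))) (L ((0:ℂ), (0:ℂ))) (Ici t) t := by
    intro t ht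
    have : L ((0:ℂ), (0:ℂ)) = 0 := by simp [hL]
    rw [this]
    exact hasDerivWithinAt_const t _ _
  have key : EqOn F (fun _ => ((0:ℂ), (0:ℂ))) (Icc 0 1) := by
    apply ODE_solution_unique_of_mem_Icc_right
      (v := fun _ p => L p) (s := fun _ => (univ : Set (ℂ × ℂ))) (K := ‖L‖₊)
    · intro t _
      exact L.lipschitz.lipschitzOnWith
    · exact hFcont
    · exact hFder
    · intro t _; trivial
    · exact continuousOn_const
    · exact hGder
    · intro t _; trivial
    · simp [hF, hf0, hf10]
  intro x hx
  exact congrArg Prod.fst (key hx)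
end

section
/- Let q > 0 be real and μ ∈ ℂ. If f : [0,1] → ℂ is twice continuously differentiable, not identically zero, and satisfies -i·f''(x) = μ·f(x) for all x ∈ [0,1], f'(0) = -i·q·f(0), and f'(1) = 0, then Re μ > 0. -/
open Set Complex

/-- All eigenvalues of the operator `Af = -i f''` with boundary conditions
`f'(0) = -i q f(0)`, `f'(1) = 0` (`q > 0`) have positive real parts. -/
theorem stmt_2 (q : ℝ) (hq : 0 < q) (μ : ℂ) (f : ℝ → ℂ)
    (hf : ContDiffOn ℝ 2 f (Set.Icc 0 1))
    (hne : ∃ x ∈ Set.Icc (0:ℝ) 1, f x ≠ 0)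
    (hode : ∀ x ∈ Set.Icc (0:ℝ) 1,
      -Complex.I * derivWithin (derivWithin f (Set.Icc 0 1)) (Set.Icc 0 1) x = μ * f x)
    (hbc0 : derivWithin f (Set.Icc 0 1) 0 = -Complex.I * (q : ℂ) * f 0)
    (hbc1 : derivWithin f (Set.Icc 0 1) 1 = 0) :
    0 < μ.re := by
  set S : Set ℝ := Set.Icc 0 1 with hS
  have hUD : UniqueDiffOn ℝ S := uniqueDiffOn_Icc one_pos
  set f1 : ℝ → ℂ := derivWithin f S with hf1def
  set f2 : ℝ → ℂ := derivWithin f1 S with hf2def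
  have hfd : ∀ x ∈ S, HasDerivWithinAt f (f1 x) S x := fun x hx =>
    ((hf.differentiableOn (by norm_num)) x hx).hasDerivWithinAt
  have hf1c : ContDiffOn ℝ 1 f1 S := hf.derivWithin hUD (by norm_num)
  have hf1d : ∀ x ∈ S, HasDerivWithinAt f1 (f2 x) S x := fun x hx =>
    ((hf1c.differentiableOn (by norm_num)) x hx).hasDerivWithinAt
  have hf2eq : ∀ x ∈ S, f2 x = Complex.I * μ * f x := by
    intro x hx
    have h := hode x hx
    linear_combination Complex.I * h + f2 x * Complex.I_sq
  -- the auxiliary real function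
  set h : ℝ → ℝ := fun x => (f1 x * (starRingEnd ℂ) (f x)).im with hhdef
  have hderiv : ∀ x ∈ S, HasDerivWithinAt h (μ.re * Complex.normSq (f x)) S x := by
    intro x hx
    have h1 : HasDerivWithinAt (fun y => f1 y * (starRingEnd ℂ) (f y))
        (f2 x * (starRingEnd ℂ) (f x) + f1 x * star (f1 x)) S x :=
      (hf1d x hx).mul ((hfd x hx).star)
    have h2 : HasDerivWithinAt h (Complex.imCLM (f2 x * (starRingEnd ℂ) (f x) + f1 x * star (f1 x))) S x :=
      Complex.imCLM.hasFDerivAt.comp_hasDerivWithinAt x h1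
    convert h2 using 1
    simp only [Complex.imCLM_apply, Complex.add_im, Complex.mul_im, hf2eq x hx]
    simp [Complex.mul_re, Complex.mul_im, Complex.normSq_apply]
    ring
  -- suppose for contradiction μ.re ≤ 0
  by_contra hpos
  push_neg at hpos
  have hcont : ContinuousOn h S := fun x hx => (hderiv x hx).continuousWithinAt
  have hanti : AntitoneOn h S := by
    apply antitoneOn_of_deriv_nonpos (convex_Icc 0 1) hcont
    · intro x hx
      rw [interior_Icc] at hx
      exact ((hderiv x (Ioo_subset_Icc_self hx)).hasDerivAt
        (Icc_mem_nhds hx.1 hx.2)).differentiableAt.differentiableWithinAt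
    · intro x hx
      rw [interior_Icc] at hx
      rw [((hderiv x (Ioo_subset_Icc_self hx)).hasDerivAt
        (Icc_mem_nhds hx.1 hx.2)).deriv]
      exact mul_nonpos_of_nonpos_of_nonneg hpos (Complex.normSq_nonneg _)
  have h1val : h 1 = 0 := by
    simp only [hhdef, hbc1, zero_mul, Complex.zero_im]
  have h0val : h 0 = -(q * Complex.normSq (f 0)) := by
    simp only [hhdef, hbc0]
    simp only [Complex.mul_im, Complex.mul_re, Complex.neg_re, Complex.neg_im,
      Complex.I_re, Complex.I_im, Complex.ofReal_re, Complex.ofReal_im,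
      Complex.conj_re, Complex.conj_im, Complex.normSq_apply]
    ring
  have hle : h 1 ≤ h 0 :=
    hanti (by constructor <;> norm_num) (by constructor <;> norm_num) zero_le_one
  have hf0 : f 0 = 0 := by
    rw [h1val, h0val] at hle
    have : Complex.normSq (f 0) ≤ 0 := by nlinarith
    exact Complex.normSq_eq_zero.mp (le_antisymm this (Complex.normSq_nonneg _))
  have hf10 : f1 0 = 0 := by rw [hbc0, hf0, mul_zero]
  -- uniqueness of ODE solutions: f ≡ 0, contradiction
  set L : (ℂ × ℂ) →L[ℝ] (ℂ × ℂ) :=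
    (ContinuousLinearMap.snd ℝ ℂ ℂ).prod
      ((Complex.I * μ) • (ContinuousLinearMap.fst ℝ ℂ ℂ)) with hLdef
  set F : ℝ → ℂ × ℂ := fun x => (f x, f1 x) with hFdef
  have hFd : ∀ x ∈ S, HasDerivWithinAt F (L (F x)) S x := by
    intro x hx
    have := (hfd x hx).prodMk (hf1d x hx)
    convert this using 1
    simp [hLdef, hFdef, hf2eq x hx]
  have key : EqOn F (fun _ => (0, 0)) S := by
    apply ODE_solution_unique_of_mem_Icc_right
      (v := fun _ p => L p) (s := fun _ => Set.univ) (K := ‖L‖₊)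
      (fun _ _ => L.lipschitz.lipschitzOnWith)
    · exact fun x hx => (hFd x hx).continuousWithinAt
    · intro t ht
      exact (hFd t (Ico_subset_Icc_self ht)).mono_of_mem_nhdsWithin
        (Icc_mem_nhdsGE_of_mem ht)
    · exact fun _ _ => trivial
    · exact continuousOn_const
    · intro t ht
      simpa [← Prod.zero_eq_mk] using (hasDerivWithinAt_const t (Set.Ici t) ((0:ℂ), (0:ℂ)))
    · exact fun _ _ => trivial
    · simp [hFdef, hf0, hf10]
  obtain ⟨x, hx, hxne⟩ := hne
  exact hxne (congrArg Prod.fst (key hx))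
end

section
/- Let q > 0 be real and let φ : [0,1] → ℂ be continuous. Define f : [0,1] → ℂ by f(x) = (i + q·x)·(∫₀¹ φ(y) dy)/(i·q) + i·∫₀ˣ (x - y)·φ(y) dy. Then f is twice continuously differentiable and satisfies -i·f''(x) = φ(x) for all x ∈ [0,1], f'(0) = -i·q·f(0), and f'(1) = 0. -/
open Set intervalIntegral

/-- The explicit inverse `A⁻¹` of the operator `Af = -i f''` with boundary conditions
`f'(0) = -i q f(0)`, `f'(1) = 0`: the function
`f(x) = (i + qx)(∫₀¹ φ)/(iq) + i ∫₀ˣ (x-y) φ(y) dy` is twice continuously differentiable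
and satisfies `-i f'' = φ` with the boundary conditions. -/
theorem stmt_3 (q : ℝ) (hq : 0 < q) (φ : ℝ → ℂ) (hφ : ContinuousOn φ (Set.Icc 0 1))
    (f : ℝ → ℂ)
    (hfdef : ∀ x ∈ Set.Icc (0:ℝ) 1,
      f x = (Complex.I + (q : ℂ) * (x : ℂ)) * (∫ y in (0:ℝ)..1, φ y) / (Complex.I * (q : ℂ))
        + Complex.I * ∫ y in (0:ℝ)..x, ((x : ℂ) - (y : ℂ)) * φ y) :
    ContDiffOn ℝ 2 f (Set.Icc 0 1)
    ∧ (∀ x ∈ Set.Icc (0:ℝ) 1,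
        -Complex.I * derivWithin (derivWithin f (Set.Icc 0 1)) (Set.Icc 0 1) x = φ x)
    ∧ derivWithin f (Set.Icc 0 1) 0 = -Complex.I * (q : ℂ) * f 0
    ∧ derivWithin f (Set.Icc 0 1) 1 = 0 := by
  have hq' : (q : ℂ) ≠ 0 := Complex.ofReal_ne_zero.2 hq.ne'
  -- continuous extension of φ
  set ψ : ℝ → ℂ := fun x => φ (max 0 (min x 1)) with hψdef
  have hψc : Continuous ψ := by
    apply hφ.comp_continuous (continuous_const.max (continuous_id.min continuous_const))
    intro x
    exact ⟨le_max_left _ _, max_le (by norm_num) (min_le_right _ _)⟩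
  have hψeq : ∀ x ∈ Icc (0:ℝ) 1, ψ x = φ x := by
    intro x hx
    simp [hψdef, min_eq_left hx.2, max_eq_right hx.1]
  set C : ℂ := ∫ y in (0:ℝ)..1, φ y with hCdef
  set G : ℝ → ℂ := fun x => ∫ y in (0:ℝ)..x, ψ y with hGdef
  set H : ℝ → ℂ := fun x => ∫ y in (0:ℝ)..x, (y:ℂ) * ψ y with hHdef
  have hG' : ∀ x : ℝ, HasDerivAt G (ψ x) x := fun x =>
    intervalIntegral.integral_hasDerivAt_right (hψc.intervalIntegrable _ _)
      (hψc.stronglyMeasurableAtFilter _ _) hψc.continuousAt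
  have hyψc : Continuous fun y : ℝ => (y:ℂ) * ψ y := Complex.continuous_ofReal.mul hψc
  have hH' : ∀ x : ℝ, HasDerivAt H ((x:ℂ) * ψ x) x := fun x =>
    intervalIntegral.integral_hasDerivAt_right (hyψc.intervalIntegrable _ _)
      (hyψc.stronglyMeasurableAtFilter _ _) hyψc.continuousAt
  set F : ℝ → ℂ := fun x =>
    (Complex.I + (q:ℂ) * (x:ℂ)) * C / (Complex.I * q) + Complex.I * ((x:ℂ) * G x - H x)
    with hFdef
  -- f = F on [0,1]
  have hfF : ∀ x ∈ Icc (0:ℝ) 1, f x = F x := by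
    intro x hx
    rw [hfdef x hx, hFdef]
    congr 1
    have h1 : (∫ y in (0:ℝ)..x, ((x:ℂ) - (y:ℂ)) * φ y)
        = ∫ y in (0:ℝ)..x, ((x:ℂ) * ψ y - (y:ℂ) * ψ y) := by
      apply intervalIntegral.integral_congr
      intro y hy
      rw [uIcc_of_le hx.1] at hy
      simp only
      rw [hψeq y ⟨hy.1, hy.2.trans hx.2⟩]
      ring
    rw [h1, intervalIntegral.integral_sub (f := fun y => (x:ℂ) * ψ y) ((continuous_const.mul hψc).intervalIntegrable _ _)
      (hyψc.intervalIntegrable _ _), intervalIntegral.integral_const_mul]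
  set F' : ℝ → ℂ := fun x => (q:ℂ) * C / (Complex.I * q) + Complex.I * G x with hF'def
  have hxC : ∀ x : ℝ, HasDerivAt (fun x : ℝ => (x:ℂ)) 1 x := fun x => by
    simpa using (hasDerivAt_id x).ofReal_comp
  have hF' : ∀ x : ℝ, HasDerivAt F (F' x) x := by
    intro x
    have h1 : HasDerivAt (fun x : ℝ => (Complex.I + (q:ℂ) * (x:ℂ)) * C / (Complex.I * q))
        ((q:ℂ) * C / (Complex.I * q)) x := by
      simpa using ((((hxC x).const_mul (q:ℂ)).const_add Complex.I).mul_const C).div_const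
        (Complex.I * q)
    have h2 : HasDerivAt (fun x : ℝ => (x:ℂ) * G x) (1 * G x + (x:ℂ) * ψ x) x :=
      (hxC x).mul (hG' x)
    have h3 := ((h2.sub (hH' x)).const_mul Complex.I)
    have := h1.add h3
    convert this using 1
    · rfl
    · rfl
    simp only [hF'def]
    ring
  have hF'' : ∀ x : ℝ, HasDerivAt F' (Complex.I * ψ x) x := fun x =>
    ((hG' x).const_mul Complex.I).const_add _
  have hUD : UniqueDiffOn ℝ (Icc (0:ℝ) 1) := uniqueDiffOn_Icc (by norm_num)
  have hdf : ∀ x ∈ Icc (0:ℝ) 1, derivWithin f (Icc 0 1) x = F' x := by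
    intro x hx
    exact ((hF' x).hasDerivWithinAt.congr (fun y hy => hfF y hy) (hfF x hx)).derivWithin
      (hUD x hx)
  have hC2F : ContDiff ℝ 2 F := by
    rw [show (2 : WithTop ℕ∞) = 1 + 1 from rfl, contDiff_succ_iff_deriv]
    refine ⟨fun x => (hF' x).differentiableAt, by simp, ?_⟩
    have hder : deriv F = F' := funext fun x => (hF' x).deriv
    rw [hder, contDiff_one_iff_deriv]
    refine ⟨fun x => (hF'' x).differentiableAt, ?_⟩
    have hder2 : deriv F' = fun x => Complex.I * ψ x := funext fun x => (hF'' x).deriv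
    rw [hder2]
    exact continuous_const.mul hψc
  refine ⟨(hC2F.contDiffOn).congr hfF, ?_, ?_, ?_⟩
  · intro x hx
    have hw : HasDerivWithinAt (derivWithin f (Icc 0 1)) (Complex.I * ψ x) (Icc 0 1) x :=
      (hF'' x).hasDerivWithinAt.congr hdf (hdf x hx)
    rw [hw.derivWithin (hUD x hx), hψeq x hx]
    rw [← mul_assoc]
    simp [Complex.I_mul_I]
  · have h0 : (0:ℝ) ∈ Icc (0:ℝ) 1 := by norm_num
    have hG0 : G 0 = 0 := intervalIntegral.integral_same
    have hH0 : H 0 = 0 := intervalIntegral.integral_same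
    rw [hdf 0 h0, hfF 0 h0]
    show (q:ℂ) * C / (Complex.I * q) + Complex.I * G 0
      = -Complex.I * q * ((Complex.I + (q:ℂ) * ((0:ℝ):ℂ)) * C / (Complex.I * q)
        + Complex.I * (((0:ℝ):ℂ) * G 0 - H 0))
    rw [hG0, hH0]
    field_simp
    ring_nf
    simp [Complex.I_sq]
    try ring
  · have h1 : (1:ℝ) ∈ Icc (0:ℝ) 1 := by norm_num
    have hG1 : G 1 = C := by
      rw [hGdef, hCdef]
      apply intervalIntegral.integral_congr
      intro y hy
      rw [uIcc_of_le (by norm_num : (0:ℝ) ≤ 1)] at hy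
      exact hψeq y hy
    rw [hdf 1 h1]
    show (q:ℂ) * C / (Complex.I * q) + Complex.I * G 1 = 0
    rw [hG1]
    field_simp
    ring_nf
    simp [Complex.I_sq]
    try ring
end

section
/- Let q > 0 be real and let λ ∈ ℂ with λ ∉ {0, i·q, -i·q}. Then there exists a twice continuously differentiable function φ : [0,1] → ℂ, not identically zero, satisfying φ''(x) = λ²·φ(x) for all x ∈ [0,1], φ'(0) = -i·q·φ(0), and φ'(1) = 0, if and only if e^{2λ} = (λ + i·q)/(λ - i·q). Moreover, when this holds, the function φ(x) = ((λ - i·q)/(λ + i·q))·e^{λx} + e^{-λx} is such a nonzero solution. -/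
open Set Complex

lemma expDeriv (c : ℂ) (x : ℝ) :
    HasDerivAt (fun t : ℝ => Complex.exp (c * t)) (c * Complex.exp (c * x)) x := by
  have h0 : HasDerivAt (fun t : ℝ => (t : ℂ)) 1 x := (hasDerivAt_id x).ofReal_comp
  have h1 : HasDerivAt (fun t : ℝ => c * (t : ℂ)) c x := by simpa using h0.const_mul c
  simpa [mul_comm] using h1.cexp

lemma expCD (c : ℂ) : ContDiff ℝ 2 (fun t : ℝ => Complex.exp (c * t)) := by
  exact Complex.contDiff_exp.comp (contDiff_const.mul Complex.ofRealCLM.contDiff)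

section Main
variable (q : ℝ) (lam : ℂ)

lemma part2 (hq : 0 < q) (hlam0 : lam ≠ 0) (hlam1 : lam ≠ Complex.I * (q : ℂ))
    (hlam2 : lam ≠ -(Complex.I * (q : ℂ)))
    (heq : Complex.exp (2 * lam) = (lam + Complex.I * (q : ℂ)) / (lam - Complex.I * (q : ℂ)))
    (φ : ℝ → ℂ)
    (hφ : ∀ x : ℝ, φ x =
      ((lam - Complex.I * (q : ℂ)) / (lam + Complex.I * (q : ℂ))) * Complex.exp (lam * (x : ℂ))
        + Complex.exp (-lam * (x : ℂ))) :
    ContDiffOn ℝ 2 φ (Set.Icc 0 1)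
    ∧ (∃ x ∈ Set.Icc (0:ℝ) 1, φ x ≠ 0)
    ∧ (∀ x ∈ Set.Icc (0:ℝ) 1,
        derivWithin (derivWithin φ (Set.Icc 0 1)) (Set.Icc 0 1) x = lam ^ 2 * φ x)
    ∧ derivWithin φ (Set.Icc 0 1) 0 = -Complex.I * (q : ℂ) * φ 0
    ∧ derivWithin φ (Set.Icc 0 1) 1 = 0 := by
  set s : Set ℝ := Set.Icc 0 1 with hs_def
  have hs : UniqueDiffOn ℝ s := uniqueDiffOn_Icc one_pos
  set Iq : ℂ := Complex.I * (q : ℂ) with hIq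
  have hpq : lam + Iq ≠ 0 := by
    intro h; exact hlam2 (by linear_combination h)
  have hmq : lam - Iq ≠ 0 := sub_ne_zero.mpr hlam1
  set c : ℂ := (lam - Iq) / (lam + Iq) with hc
  have hφeq : φ = fun x : ℝ => c * Complex.exp (lam * x) + Complex.exp (-lam * x) := by
    funext x; exact hφ x
  -- derivative function
  have hψ : True := trivial
  let ψ : ℝ → ℂ := fun x : ℝ => lam * (c * Complex.exp (lam * x) - Complex.exp (-lam * x))
  have hD : ∀ x : ℝ, HasDerivAt φ (ψ x) x := by
    intro x
    rw [hφeq]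
    have := ((expDeriv lam x).const_mul c).add (expDeriv (-lam) x)
    refine HasDerivAt.congr_deriv this ?_
    show _ = lam * (c * Complex.exp (lam * x) - Complex.exp (-lam * x))
    ring
  have hD2 : ∀ x : ℝ, HasDerivAt ψ (lam ^ 2 * φ x) x := by
    intro x
    have := (((expDeriv lam x).const_mul c).sub (expDeriv (-lam) x)).const_mul lam
    have h2 : HasDerivAt ψ (lam * (c * (lam * Complex.exp (lam * x)) - -lam * Complex.exp (-lam * x))) x := this
    convert h2 using 1
    rw [hφ x]; ring
  have hdw : ∀ x ∈ s, derivWithin φ s x = ψ x := fun x hx =>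
    ((hD x).hasDerivWithinAt).derivWithin (hs x hx)
  refine ⟨?_, ?_, ?_, ?_, ?_⟩
  · rw [hφeq]
    exact ((contDiff_const.mul (expCD lam)).add (expCD (-lam))).contDiffOn
  · refine ⟨0, by simp [hs_def], ?_⟩
    rw [hφ 0]
    simp only [Complex.ofReal_zero, mul_zero, Complex.exp_zero, mul_one]
    intro h
    rw [hc] at h
    field_simp at h
    exact hlam0 (by linear_combination h / 2)
  · intro x hx
    have : derivWithin (derivWithin φ s) s x = derivWithin ψ s x :=
      derivWithin_congr hdw (hdw x hx)
    rw [this, ((hD2 x).hasDerivWithinAt).derivWithin (hs x hx)]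
  · rw [hdw 0 (by simp [hs_def]), hφ 0]
    show lam * (c * Complex.exp (lam * ((0:ℝ):ℂ)) - Complex.exp (-lam * ((0:ℝ):ℂ))) = _
    simp only [Complex.ofReal_zero, mul_zero, Complex.exp_zero, mul_one]
    rw [hc]
    field_simp
    ring
  · rw [hdw 1 (by simp [hs_def])]
    have hce : c * Complex.exp (2 * lam) = 1 := by
      rw [heq, hc]; field_simp
    have hsplit : Complex.exp (lam * (1:ℝ)) =
        Complex.exp (-lam * (1:ℝ)) * Complex.exp (2 * lam) := by
      rw [← Complex.exp_add]; congr 1; push_cast; ring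
    show lam * (c * Complex.exp (lam * (1:ℝ)) - Complex.exp (-lam * (1:ℝ))) = 0
    rw [hsplit]
    rw [show c * (Complex.exp (-lam * (1:ℝ)) * Complex.exp (2 * lam)) =
      Complex.exp (-lam * (1:ℝ)) * (c * Complex.exp (2 * lam)) by ring, hce]
    simp


end Main

lemma part1 (q : ℝ) (lam : ℂ) (hq : 0 < q) (hlam0 : lam ≠ 0)
    (hlam1 : lam ≠ Complex.I * (q : ℂ)) (hlam2 : lam ≠ -(Complex.I * (q : ℂ)))
    (φ : ℝ → ℂ) (hφ : ContDiffOn ℝ 2 φ (Set.Icc 0 1))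
    (hne : ∃ x ∈ Set.Icc (0:ℝ) 1, φ x ≠ 0)
    (hode : ∀ x ∈ Set.Icc (0:ℝ) 1,
        derivWithin (derivWithin φ (Set.Icc 0 1)) (Set.Icc 0 1) x = lam ^ 2 * φ x)
    (hb0 : derivWithin φ (Set.Icc 0 1) 0 = -Complex.I * (q : ℂ) * φ 0)
    (hb1 : derivWithin φ (Set.Icc 0 1) 1 = 0) :
    Complex.exp (2 * lam) = (lam + Complex.I * (q : ℂ)) / (lam - Complex.I * (q : ℂ)) := by
  set s : Set ℝ := Set.Icc 0 1 with hs_def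
  have hs : UniqueDiffOn ℝ s := uniqueDiffOn_Icc one_pos
  set Iq : ℂ := Complex.I * (q : ℂ) with hIq
  have hpq : lam + Iq ≠ 0 := by intro h; exact hlam2 (by linear_combination h)
  have hmq : lam - Iq ≠ 0 := sub_ne_zero.mpr hlam1
  set u : ℝ → ℂ := derivWithin φ s with hu_def
  have hu : ContDiffOn ℝ 1 u s := hφ.derivWithin hs (by norm_num)
  have hφd : DifferentiableOn ℝ φ s := hφ.differentiableOn two_ne_zero
  have hud : DifferentiableOn ℝ u s := hu.differentiableOn one_ne_zero
  have Hφ : ∀ x ∈ s, HasDerivWithinAt φ (u x) s x := fun x hx =>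
    (hφd x hx).hasDerivWithinAt
  have Hu : ∀ x ∈ s, HasDerivWithinAt u (lam ^ 2 * φ x) s x := by
    intro x hx
    have h := (hud x hx).hasDerivWithinAt
    rwa [show derivWithin u s x = lam ^ 2 * φ x from hode x hx] at h
  -- Wronskian-type invariants
  set g₁ : ℝ → ℂ := fun x => (u x - lam * φ x) * Complex.exp (lam * x) with hg₁
  set g₂ : ℝ → ℂ := fun x => (u x + lam * φ x) * Complex.exp (-lam * x) with hg₂
  have Hg₁ : ∀ x ∈ s, HasDerivWithinAt g₁ 0 s x := by
    intro x hx
    have h := ((Hu x hx).sub ((Hφ x hx).const_mul lam)).mul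
      ((expDeriv lam x).hasDerivWithinAt)
    refine h.congr_deriv ?_
    simp only [Pi.sub_apply]
    ring
  have Hg₂ : ∀ x ∈ s, HasDerivWithinAt g₂ 0 s x := by
    intro x hx
    have h := ((Hu x hx).add ((Hφ x hx).const_mul lam)).mul
      ((expDeriv (-lam) x).hasDerivWithinAt)
    refine h.congr_deriv ?_
    simp only [Pi.add_apply]
    ring
  have c₁ : ∀ x ∈ s, g₁ x = g₁ 0 :=
    constant_of_derivWithin_zero
      (fun x hx => ((Hg₁ x hx).differentiableWithinAt))
      (fun x hx => (Hg₁ x (Set.Ico_subset_Icc_self hx)).derivWithin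
        (hs x (Set.Ico_subset_Icc_self hx)))
  have c₂ : ∀ x ∈ s, g₂ x = g₂ 0 :=
    constant_of_derivWithin_zero
      (fun x hx => ((Hg₂ x hx).differentiableWithinAt))
      (fun x hx => (Hg₂ x (Set.Ico_subset_Icc_self hx)).derivWithin
        (hs x (Set.Ico_subset_Icc_self hx)))
  have h0s : (0:ℝ) ∈ s := by simp [hs_def]
  have h1s : (1:ℝ) ∈ s := by simp [hs_def]
  have hu0 : u 0 = -Iq * φ 0 := by rw [hb0]; ring
  have hu1 : u 1 = 0 := hb1
  have e10 : Complex.exp (lam * ((0:ℝ):ℂ)) = 1 := by norm_num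
  have e20 : Complex.exp (-lam * ((0:ℝ):ℂ)) = 1 := by norm_num
  -- value of the invariants
  have g10 : g₁ 0 = (-Iq - lam) * φ 0 := by
    rw [hg₁]; simp only [e10, mul_one, hu0]; ring
  have g20 : g₂ 0 = (-Iq + lam) * φ 0 := by
    rw [hg₂]; simp only [e20, mul_one, hu0]; ring
  -- φ 0 ≠ 0
  have hφ0 : φ 0 ≠ 0 := by
    intro h00
    obtain ⟨x₀, hx₀, hx₀ne⟩ := hne
    apply hx₀ne
    have z1 : g₁ x₀ = 0 := by rw [c₁ x₀ hx₀, g10, h00, mul_zero]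
    have z2 : g₂ x₀ = 0 := by rw [c₂ x₀ hx₀, g20, h00, mul_zero]
    rw [hg₁] at z1; rw [hg₂] at z2
    simp only [mul_eq_zero, Complex.exp_ne_zero, or_false] at z1 z2
    have : (2 * lam) * φ x₀ = 0 := by linear_combination z2 - z1
    rcases mul_eq_zero.mp this with h | h
    · exact absurd (by linear_combination h / 2) hlam0
    · exact h
  -- the two boundary relations
  have E1 : lam * φ 1 * Complex.exp (lam * ((1:ℝ):ℂ)) = (lam + Iq) * φ 0 := by
    have h := c₁ 1 h1s
    rw [g10] at h
    have h' : (u 1 - lam * φ 1) * Complex.exp (lam * ((1:ℝ):ℂ)) = (-Iq - lam) * φ 0 := h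
    rw [hu1] at h'
    linear_combination -h'
  have E2 : lam * φ 1 * Complex.exp (-lam * ((1:ℝ):ℂ)) = (lam - Iq) * φ 0 := by
    have h := c₂ 1 h1s
    rw [g20] at h
    have h' : (u 1 + lam * φ 1) * Complex.exp (-lam * ((1:ℝ):ℂ)) = (-Iq + lam) * φ 0 := h
    rw [hu1] at h'
    linear_combination h'
  have hsplit : Complex.exp (lam * ((1:ℝ):ℂ)) =
      Complex.exp (-lam * ((1:ℝ):ℂ)) * Complex.exp (2 * lam) := by
    rw [← Complex.exp_add]; congr 1; push_cast; ring
  have key : Complex.exp (2 * lam) * ((lam - Iq) * φ 0) = (lam + Iq) * φ 0 := by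
    rw [← E2, ← E1, hsplit]; ring
  have key2 : Complex.exp (2 * lam) * (lam - Iq) = lam + Iq := by
    have := mul_right_cancel₀ hφ0 (by linear_combination key :
      Complex.exp (2 * lam) * (lam - Iq) * φ 0 = (lam + Iq) * φ 0)
    exact this
  rw [eq_div_iff hmq]
  exact key2


/-- The characteristic equation for the operator `Af = -i f''` with boundary conditions
`f'(0) = -i q f(0)`, `f'(1) = 0`: for `λ ∉ {0, iq, -iq}`, a nonzero solution of
`φ'' = λ² φ` with these boundary conditions exists iff `e^{2λ} = (λ+iq)/(λ-iq)`;
moreover in that case `φ(x) = ((λ-iq)/(λ+iq)) e^{λx} + e^{-λx}` is such a solution. -/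
theorem stmt_4 (q : ℝ) (hq : 0 < q) (lam : ℂ)
    (hlam0 : lam ≠ 0) (hlam1 : lam ≠ Complex.I * (q : ℂ)) (hlam2 : lam ≠ -(Complex.I * (q : ℂ))) :
    ((∃ φ : ℝ → ℂ, ContDiffOn ℝ 2 φ (Set.Icc 0 1)
        ∧ (∃ x ∈ Set.Icc (0:ℝ) 1, φ x ≠ 0)
        ∧ (∀ x ∈ Set.Icc (0:ℝ) 1,
            derivWithin (derivWithin φ (Set.Icc 0 1)) (Set.Icc 0 1) x = lam ^ 2 * φ x)
        ∧ derivWithin φ (Set.Icc 0 1) 0 = -Complex.I * (q : ℂ) * φ 0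
        ∧ derivWithin φ (Set.Icc 0 1) 1 = 0)
      ↔ Complex.exp (2 * lam) = (lam + Complex.I * (q : ℂ)) / (lam - Complex.I * (q : ℂ)))
    ∧ (Complex.exp (2 * lam) = (lam + Complex.I * (q : ℂ)) / (lam - Complex.I * (q : ℂ)) →
        ∀ φ : ℝ → ℂ,
          (∀ x : ℝ, φ x =
            ((lam - Complex.I * (q : ℂ)) / (lam + Complex.I * (q : ℂ))) * Complex.exp (lam * (x : ℂ))
              + Complex.exp (-lam * (x : ℂ))) →
          ContDiffOn ℝ 2 φ (Set.Icc 0 1)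
          ∧ (∃ x ∈ Set.Icc (0:ℝ) 1, φ x ≠ 0)
          ∧ (∀ x ∈ Set.Icc (0:ℝ) 1,
              derivWithin (derivWithin φ (Set.Icc 0 1)) (Set.Icc 0 1) x = lam ^ 2 * φ x)
          ∧ derivWithin φ (Set.Icc 0 1) 0 = -Complex.I * (q : ℂ) * φ 0
          ∧ derivWithin φ (Set.Icc 0 1) 1 = 0) := by
  refine ⟨⟨fun ⟨φ, h1, h2, h3, h4, h5⟩ => part1 q lam hq hlam0 hlam1 hlam2 φ h1 h2 h3 h4 h5,
      fun heq => ?_⟩,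
    fun heq φ hφ => part2 q lam hq hlam0 hlam1 hlam2 heq φ hφ⟩
  exact ⟨_, part2 q lam hq hlam0 hlam1 hlam2 heq
    (fun x : ℝ => ((lam - Complex.I * (q : ℂ)) / (lam + Complex.I * (q : ℂ)))
        * Complex.exp (lam * (x : ℂ)) + Complex.exp (-lam * (x : ℂ)))
    (fun _ => rfl)⟩
end

section
/- For every real θ > 0 and every real μ, the series ∑_{k=1}^∞ 1/(θ + |μ - k²|) converges and satisfies ∑_{k=1}^∞ 1/(θ + |μ - k²|) ≤ 1/θ + 2·∑_{k=1}^∞ 1/(θ + k²). -/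
/-!
Let `k₀` be the integer nearest to `√μ` (or `k₀ = 1` when `μ ≤ 1`). Then
`|μ - n²| ≥ (n - k₀)²` for every positive integer `n`, so the `n`-th term is dominated by
`1/(θ + (n - k₀)²)`. Since `n ↦ n - k₀` is injective into `ℤ`, the whole series is at most
`∑_{j ∈ ℤ} 1/(θ + j²) = 1/θ + 2 ∑_{k ≥ 1} 1/(θ + k²)`.
-/

/-- With `j = |x - r|`, factor `s² - x² = (s + x)(s - x)` and use `|s - x| ≥ j - 1/2` and
`s + x ≥ j + 3/2`; the product `(j - 1/2)(j + 3/2)` is at least `j²` once `j ≥ 1`. -/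
lemma sq_sub_le_abs_sq_sub_sq {s r x : ℝ} (hr : 1 ≤ r) (hx : 1 ≤ x) (hsr : |s - r| ≤ 1 / 2)
    (hxr : 1 ≤ |x - r|) : (x - r) ^ 2 ≤ |s ^ 2 - x ^ 2| := by
  set j := |x - r|
  have hsx : j - 1 / 2 ≤ |s - x| := by
    have := abs_sub_le x s r
    rw [abs_sub_comm x s] at this
    linarith
  have hsum : j + 3 / 2 ≤ s + x := by
    have : j ≤ x + r - 2 := abs_le.mpr ⟨by linarith, by linarith⟩
    linarith [(abs_le.mp hsr).1]
  calc (x - r) ^ 2 = j ^ 2 := (sq_abs _).symm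
    _ ≤ (j - 1 / 2) * (j + 3 / 2) := by nlinarith
    _ ≤ |s - x| * (s + x) := mul_le_mul hsx hsum (by linarith) (abs_nonneg _)
    _ = |s ^ 2 - x ^ 2| := by
      rw [sq_sub_sq, abs_mul, abs_of_pos (by linarith : 0 < s + x), mul_comm]

lemma exists_int_sq_sub_le_abs_sub_sq (μ : ℝ) :
    ∃ k₀ : ℤ, ∀ n : ℤ, 0 < n → ((n : ℝ) - k₀) ^ 2 ≤ |μ - (n : ℝ) ^ 2| := by
  rcases le_or_gt μ 1 with hμ | hμ
  · refine ⟨1, fun n hn => ?_⟩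
    have hn : (1 : ℝ) ≤ n := by exact_mod_cast hn
    rw [abs_of_nonpos (by nlinarith)]
    push_cast
    nlinarith
  · set s := √μ
    have hμs : μ = s ^ 2 := (Real.sq_sqrt (by linarith)).symm
    have hs : 1 ≤ s := Real.one_le_sqrt.mpr hμ.le
    have hsr := abs_sub_round s
    have hr : (1 : ℝ) ≤ round s := by
      have : (0 : ℝ) < round s := by linarith [(abs_le.mp hsr).2]
      exact_mod_cast (show (0 : ℤ) < round s by exact_mod_cast this)
    refine ⟨round s, fun n hn => ?_⟩
    rcases eq_or_ne n (round s) with rfl | hne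
    · simp
    · have hxr : (1 : ℝ) ≤ |(n : ℝ) - round s| := by
        exact_mod_cast Int.one_le_abs (sub_ne_zero.mpr hne)
      rw [hμs]
      exact sq_sub_le_abs_sq_sub_sq hr (by exact_mod_cast hn) hsr hxr

lemma summable_one_div_add_sq_succ {θ : ℝ} (hθ : 0 ≤ θ) :
    Summable fun k : ℕ => 1 / (θ + ((k : ℝ) + 1) ^ 2) := by
  have h := (summable_nat_add_iff 1).mpr (Real.summable_one_div_nat_pow.mpr one_lt_two)
  refine h.of_nonneg_of_le (fun k => by positivity) fun k => ?_
  push_cast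
  gcongr
  linarith

lemma hasSum_int_one_div_add_sq {θ : ℝ} (hθ : 0 ≤ θ) :
    HasSum (fun j : ℤ => 1 / (θ + (j : ℝ) ^ 2))
      (1 / θ + 2 * ∑' k : ℕ, 1 / (θ + ((k : ℝ) + 1) ^ 2)) := by
  have h := (summable_one_div_add_sq_succ hθ).hasSum
  convert HasSum.of_add_one_of_neg_add_one (f := fun j : ℤ => 1 / (θ + (j : ℝ) ^ 2))
    (by convert h using 4; push_cast; rfl) (by convert h using 3; push_cast; ring) using 1
  simp only [Int.cast_zero, zero_pow two_ne_zero, add_zero]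
  ring

/-- The key summation estimate in the proof of Proposition 2.9:
`∑_{k≥1} 1/(θ + |μ - k²|)` converges and is at most `1/θ + 2 ∑_{k≥1} 1/(θ + k²)`. -/
theorem stmt_5 (θ μ : ℝ) (hθ : 0 < θ) :
    Summable (fun k : ℕ => 1 / (θ + |μ - ((k : ℝ) + 1) ^ 2|))
    ∧ ∑' k : ℕ, 1 / (θ + |μ - ((k : ℝ) + 1) ^ 2|)
        ≤ 1 / θ + 2 * ∑' k : ℕ, 1 / (θ + ((k : ℝ) + 1) ^ 2) := by
  obtain ⟨k₀, hk₀⟩ := exists_int_sq_sub_le_abs_sub_sq μ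
  set g : ℤ → ℝ := fun j => 1 / (θ + (j : ℝ) ^ 2)
  have hg := hasSum_int_one_div_add_sq hθ.le
  set e : ℕ → ℤ := fun k => k + 1 - k₀
  have he : Function.Injective e := fun a b h => by simpa [e] using h
  have hge : Summable (g ∘ e) := hg.summable.comp_injective he
  have hle : ∀ k : ℕ, 1 / (θ + |μ - ((k : ℝ) + 1) ^ 2|) ≤ g (e k) := fun k => by
    have := hk₀ (k + 1) (by omega)
    push_cast at this
    simp only [g, e]
    push_cast
    gcongr
  have hsum := hge.of_nonneg_of_le (fun k => by positivity) hle
  refine ⟨hsum, ?_⟩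
  calc _ ≤ ∑' k, g (e k) := hsum.tsum_le_tsum hle hge
    _ ≤ ∑' j, g j := tsum_comp_le_tsum_of_inj hg.summable (fun j => by positivity) he
    _ = _ := hg.tsum_eq
end

section
/- Let a > 0 be real and let (d_k)_{k≥1} be a bounded sequence of complex numbers. Define G(s) = ∑_{k=1}^∞ d_k/(s - i·a·k²) for every s ∈ ℂ with Re s > 0. Then G is strictly proper: for every ε > 0 there exists X > 0 such that for every s ∈ ℂ with Re s ≥ X one has |G(s)| ≤ ε (uniformly with respect to Im s). -/
open Filter Finset

private lemma aux_sq_summable : Summable (fun n : ℕ => ((n : ℝ) ^ 2)⁻¹) := by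
  have := Real.summable_one_div_nat_pow (p := 2)
  simp only [one_div] at this
  exact this.mpr (by norm_num)

/-- Strict properness in Proposition 2.9: the transfer function
`G(s) = ∑_{k≥1} d_k/(s - i a k²)` (with `(d_k)` bounded) tends to `0` as `Re s → ∞`,
uniformly with respect to `Im s`. -/
theorem stmt_8 (a : ℝ) (ha : 0 < a) (d : ℕ → ℂ)
    (hd : ∃ m : ℝ, ∀ k : ℕ, ‖d k‖ ≤ m) :
    ∀ ε > (0 : ℝ), ∃ X > (0 : ℝ), ∀ s : ℂ, X ≤ s.re →
      ‖∑' k : ℕ, d k / (s - Complex.I * (a : ℂ) * (((k : ℝ) + 1 : ℝ) : ℂ) ^ 2)‖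
        ≤ ε := by
  obtain ⟨m, hm⟩ := hd
  set M : ℝ := max m 1 with hMdef
  have hM1 : (1 : ℝ) ≤ M := le_max_right _ _
  have hM0 : (0 : ℝ) < M := lt_of_lt_of_le one_pos hM1
  have hdM : ∀ k, ‖d k‖ ≤ M := fun k => (hm k).trans (le_max_left _ _)
  intro ε hε
  -- choose the cut-off J from the tail of ∑ 1/i²
  have htail : Tendsto (fun i : ℕ => ∑' k : ℕ, (((k + i : ℕ) : ℝ) ^ 2)⁻¹) atTop (nhds 0) :=
    tendsto_sum_nat_add (fun n : ℕ => ((n : ℝ) ^ 2)⁻¹)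
  have hδ : (0 : ℝ) < a * ε / (8 * M) := by positivity
  obtain ⟨J, hJ1, hJ2⟩ :
      ∃ J : ℕ, 1 ≤ J ∧ ∑' k : ℕ, (((k + J : ℕ) : ℝ) ^ 2)⁻¹ ≤ a * ε / (8 * M) := by
    obtain ⟨J, h1, h2⟩ :=
      ((htail.eventually (eventually_le_nhds hδ)).and (eventually_ge_atTop 1)).exists
    exact ⟨J, h2, h1⟩
  refine ⟨max 1 ((2 * M + 4 * M * J) * (2 / ε)), lt_of_lt_of_le one_pos (le_max_left _ _), ?_⟩
  intro s hs
  have hθ1 : (1 : ℝ) ≤ s.re := le_trans (le_max_left _ _) hs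
  have hθ0 : (0 : ℝ) < s.re := lt_of_lt_of_le one_pos hθ1
  set θ : ℝ := s.re with hθdef
  set μ : ℝ := s.im with hμdef
  set t : ℝ := Real.sqrt (max μ 0 / a) with htdef
  have ht0 : 0 ≤ t := Real.sqrt_nonneg _
  have ht2 : a * t ^ 2 = max μ 0 := by
    rw [htdef, Real.sq_sqrt (by positivity)]
    field_simp
  set n : ℕ := ⌈t⌉₊ with hn
  set E : ℕ → ℕ := fun k => if n ≤ k then k - n else n - k - 2 with hE
  set w : ℕ → ℝ := fun k => 2 * M / (θ + a * (E k : ℝ) ^ 2) with hw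
  set g : ℕ → ℝ := fun i => 2 * M / (θ + a * (i : ℝ) ^ 2) with hg
  have hden : ∀ x : ℝ, 0 < θ + a * x ^ 2 := fun x => by positivity
  have hgpos : ∀ i : ℕ, 0 < g i := fun i => div_pos (by positivity) (hden _)
  have hwpos : ∀ k : ℕ, 0 < w k := fun k => div_pos (by positivity) (hden _)
  -- geometric core
  have hEle : ∀ k : ℕ, (E k : ℝ) ≤ |t - ((k : ℝ) + 1)| := by
    intro k
    by_cases hk : n ≤ k
    · have htn : t ≤ (n : ℝ) := Nat.le_ceil t
      have hEk : (E k : ℝ) = (k : ℝ) - (n : ℝ) := by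
        simp only [hE, if_pos hk]
        push_cast [Nat.cast_sub hk]
        ring
      have hkn : (n : ℝ) ≤ (k : ℝ) := by exact_mod_cast hk
      rw [hEk, abs_of_nonpos (by linarith)]
      linarith
    · push_neg at hk
      by_cases hk2 : n ≤ k + 2
      · have : E k = 0 := by simp only [hE, if_neg (not_le.mpr hk)]; omega
        rw [this]
        simpa using abs_nonneg _
      · push_neg at hk2
        have hn1 : 1 ≤ n := by omega
        have hEk : (E k : ℝ) = (n : ℝ) - (k : ℝ) - 2 := by
          simp only [hE, if_neg (not_le.mpr hk)]
          have h' : n - k - 2 = n - (k + 2) := by omega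
          rw [h', Nat.cast_sub (by omega : k + 2 ≤ n)]
          push_cast
          ring
        have htn1 : (n : ℝ) - 1 < t := by
          by_contra h
          push_neg at h
          have h' : t ≤ ((n - 1 : ℕ) : ℝ) := by
            push_cast [Nat.cast_sub hn1]
            linarith
          have := Nat.ceil_le.mpr h'
          omega
        have hkr : (k : ℝ) + 2 + 1 ≤ (n : ℝ) := by exact_mod_cast hk2
        rw [hEk, abs_of_nonneg (by linarith)]
        linarith
  have hIm : ∀ k : ℕ, a * (E k : ℝ) ^ 2 ≤ |μ - a * ((k : ℝ) + 1) ^ 2| := by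
    intro k
    set κ : ℝ := (k : ℝ) + 1 with hκ
    have hκ0 : (0 : ℝ) ≤ κ := by positivity
    have h1 : (E k : ℝ) ^ 2 ≤ (t - κ) ^ 2 := by
      have := hEle k
      calc (E k : ℝ) ^ 2 ≤ |t - κ| ^ 2 := by
            apply pow_le_pow_left₀ (Nat.cast_nonneg _) this
        _ = (t - κ) ^ 2 := sq_abs _
    have h2 : a * (t - κ) ^ 2 ≤ |μ - a * κ ^ 2| := by
      rcases le_or_gt μ 0 with hμ | hμ
      · have hmax : max μ 0 = 0 := max_eq_right hμ
        have ht00 : t = 0 := by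
          rw [htdef, hmax]
          simp
        have hκsq : 0 ≤ a * κ ^ 2 := by positivity
        have h2 : μ - a * κ ^ 2 ≤ 0 := by linarith
        rw [abs_of_nonpos h2, ht00]
        have hr : a * (0 - κ) ^ 2 = a * κ ^ 2 := by ring
        linarith
      · have hmax : max μ 0 = μ := max_eq_left hμ.le
        have hμt : μ = a * t ^ 2 := by rw [ht2, hmax]
        rcases le_total t κ with h | h
        · have hp : 0 ≤ a * ((κ - t) * (κ + t)) :=
            mul_nonneg ha.le (mul_nonneg (by linarith) (by linarith))
          have key1 : a * ((κ - t) * (κ + t)) = a * κ ^ 2 - a * t ^ 2 := by ring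
          have h2 : μ - a * κ ^ 2 ≤ 0 := by linarith
          have hq : 0 ≤ a * ((κ - t) * t) :=
            mul_nonneg ha.le (mul_nonneg (by linarith) ht0)
          have key2 : a * ((κ - t) * t) * 2 = (a * κ ^ 2 - a * t ^ 2) - a * (t - κ) ^ 2 := by
            ring
          rw [abs_of_nonpos h2]
          linarith
        · have hp : 0 ≤ a * ((t - κ) * (t + κ)) :=
            mul_nonneg ha.le (mul_nonneg (by linarith) (by linarith))
          have key1 : a * ((t - κ) * (t + κ)) = a * t ^ 2 - a * κ ^ 2 := by ring
          have h2 : 0 ≤ μ - a * κ ^ 2 := by linarith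
          have hq : 0 ≤ a * ((t - κ) * κ) :=
            mul_nonneg ha.le (mul_nonneg (by linarith) hκ0)
          have key2 : a * ((t - κ) * κ) * 2 = (a * t ^ 2 - a * κ ^ 2) - a * (t - κ) ^ 2 := by
            ring
          rw [abs_of_nonneg h2]
          linarith
    calc a * (E k : ℝ) ^ 2 ≤ a * (t - κ) ^ 2 := mul_le_mul_of_nonneg_left h1 ha.le
      _ ≤ |μ - a * κ ^ 2| := h2
  -- per-term bound
  have hterm : ∀ k : ℕ,
      ‖d k / (s - Complex.I * (a : ℂ) * (((k : ℝ) + 1 : ℝ) : ℂ) ^ 2)‖ ≤ w k := by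
    intro k
    set z : ℂ := s - Complex.I * (a : ℂ) * (((k : ℝ) + 1 : ℝ) : ℂ) ^ 2 with hz
    have hzre : z.re = θ := by
      simp [hz, hθdef, Complex.sub_re, Complex.mul_re, Complex.mul_im, Complex.I_re, Complex.I_im,
        Complex.ofReal_re, Complex.ofReal_im, pow_two]
    have hzim : z.im = μ - a * ((k : ℝ) + 1) ^ 2 := by
      simp [hz, hμdef, Complex.sub_im, Complex.mul_re, Complex.mul_im, Complex.I_re, Complex.I_im,
        Complex.ofReal_re, Complex.ofReal_im, pow_two]
    have h1 : θ ≤ ‖z‖ := by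
      calc θ = z.re := hzre.symm
        _ ≤ |z.re| := le_abs_self _
        _ ≤ ‖z‖ := Complex.abs_re_le_norm z
    have h2 : |μ - a * ((k : ℝ) + 1) ^ 2| ≤ ‖z‖ := by
      rw [← hzim]; exact Complex.abs_im_le_norm z
    have habs : (θ + a * (E k : ℝ) ^ 2) / 2 ≤ ‖z‖ := by
      have := hIm k
      linarith
    have hz0 : (0 : ℝ) < ‖z‖ := lt_of_lt_of_le (by positivity) habs
    rw [norm_div]
    calc ‖d k‖ / ‖z‖ ≤ M / ((θ + a * (E k : ℝ) ^ 2) / 2) := by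
          apply div_le_div₀ hM0.le (hdM k) (by positivity) habs
      _ = w k := by
          rw [hw]
          field_simp
  -- summability
  have hq : Summable (fun n : ℕ => ((n : ℝ) ^ 2)⁻¹) := aux_sq_summable
  have hgle : ∀ i : ℕ, g (i + 1) ≤ 2 * M / a * (((i + 1 : ℕ) : ℝ) ^ 2)⁻¹ := by
    intro i
    have h1 : (0 : ℝ) < a * ((i + 1 : ℕ) : ℝ) ^ 2 := by positivity
    have h2 : 2 * M / a * (((i + 1 : ℕ) : ℝ) ^ 2)⁻¹ = 2 * M / (a * ((i + 1 : ℕ) : ℝ) ^ 2) := by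
      field_simp
    rw [hg, h2]
    push_cast
    gcongr
    linarith
  have hg_sum : Summable g := by
    rw [← summable_nat_add_iff 1]
    exact Summable.of_nonneg_of_le (fun i => (hgpos _).le) hgle
      (((summable_nat_add_iff 1).mpr hq).mul_left _)
  have hwg : ∀ i : ℕ, w (i + n) = g i := by
    intro i
    simp only [hw, hg, hE, if_pos (Nat.le_add_left n i), Nat.add_sub_cancel]
  have hw_sum : Summable w := by
    rw [← summable_nat_add_iff n]
    exact hg_sum.congr fun i => (hwg i).symm
  -- the norm series is summable
  have hnorm_sum : Summable (fun k : ℕ =>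
      ‖d k / (s - Complex.I * (a : ℂ) * (((k : ℝ) + 1 : ℝ) : ℂ) ^ 2)‖) :=
    Summable.of_nonneg_of_le (fun k => norm_nonneg _) hterm hw_sum
  -- head sum bound
  set G : ℕ → ℝ := fun r => g (r - 1) with hG
  have hG_sum : Summable G := by
    rw [← summable_nat_add_iff 1]
    exact hg_sum.congr fun i => by simp [hG]
  have hGsum_eq : ∑' r, G r = g 0 + ∑' i, g i := by
    rw [← Summable.sum_add_tsum_nat_add 1 hG_sum]
    have e1 : ∑ r ∈ Finset.range 1, G r = g 0 := by simp [hG]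
    have e2 : ∑' i : ℕ, G (i + 1) = ∑' i : ℕ, g i :=
      tsum_congr fun i => by simp [hG]
    rw [e1, e2]
  have hhead : ∑ k ∈ Finset.range n, w k ≤ g 0 + ∑' i, g i := by
    rcases Nat.eq_zero_or_pos n with h0 | hn1
    · rw [h0]
      simp only [Finset.range_zero, Finset.sum_empty]
      exact add_nonneg (hgpos 0).le (tsum_nonneg fun i => (hgpos i).le)
    · rw [← Finset.sum_range_reflect w n]
      have : ∀ j ∈ Finset.range n, w (n - 1 - j) = G j := by
        intro j hj
        have hj' : j < n := Finset.mem_range.mp hj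
        have hk : n - 1 - j < n := by omega
        have hnat : n - (n - 1 - j) - 2 = j - 1 := by omega
        simp only [hw, hG, hg, hE, if_neg (not_le.mpr hk), hnat]
      rw [Finset.sum_congr rfl this, ← hGsum_eq]
      exact Summable.sum_le_tsum _ (fun i _ => (hgpos _).le) hG_sum
  -- tail sum bound
  have hgJle : ∀ i : ℕ, g (i + J) ≤ 2 * M / a * (((i + J : ℕ) : ℝ) ^ 2)⁻¹ := by
    intro i
    have h1 : (0 : ℝ) < ((i + J : ℕ) : ℝ) := by
      have h0 : 0 < i + J := by omega
      exact_mod_cast h0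
    have h2 : 2 * M / a * (((i + J : ℕ) : ℝ) ^ 2)⁻¹ = 2 * M / (a * ((i + J : ℕ) : ℝ) ^ 2) := by
      field_simp
    simp only [hg]
    rw [h2]
    gcongr
    linarith
  have hshift_sum : Summable (fun i : ℕ => 2 * M / a * (((i + J : ℕ) : ℝ) ^ 2)⁻¹) :=
    (((summable_nat_add_iff J).mpr hq).mul_left _)
  have htailJ : ∑' i : ℕ, g (i + J) ≤ ε / 4 := by
    calc ∑' i : ℕ, g (i + J) ≤ ∑' i : ℕ, 2 * M / a * (((i + J : ℕ) : ℝ) ^ 2)⁻¹ := by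
          apply Summable.tsum_le_tsum hgJle ((summable_nat_add_iff J).mpr hg_sum) hshift_sum
      _ = 2 * M / a * ∑' i : ℕ, (((i + J : ℕ) : ℝ) ^ 2)⁻¹ := tsum_mul_left
      _ ≤ 2 * M / a * (a * ε / (8 * M)) := by
          apply mul_le_mul_of_nonneg_left hJ2 (by positivity)
      _ = ε / 4 := by field_simp; ring
  have hgsum_le : ∑' i, g i ≤ (J : ℝ) * (2 * M / θ) + ε / 4 := by
    rw [← Summable.sum_add_tsum_nat_add J hg_sum]
    have h1 : ∑ i ∈ Finset.range J, g i ≤ (J : ℝ) * (2 * M / θ) := by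
      calc ∑ i ∈ Finset.range J, g i ≤ ∑ i ∈ Finset.range J, 2 * M / θ := by
            apply Finset.sum_le_sum
            intro i _
            simp only [hg]
            gcongr
            have h0 : 0 ≤ a * (i : ℝ) ^ 2 := by positivity
            linarith
      _ = (J : ℝ) * (2 * M / θ) := by
            rw [Finset.sum_const, Finset.card_range]
            simp [nsmul_eq_mul]
    linarith [htailJ]
  -- put everything together
  have hg0 : g 0 = 2 * M / θ := by simp [hg]
  have hwsum_le : ∑' k, w k ≤ 2 * M / θ + 2 * ((J : ℝ) * (2 * M / θ) + ε / 4) := by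
    rw [← Summable.sum_add_tsum_nat_add n hw_sum]
    have h2 : ∑' i, w (i + n) = ∑' i, g i := tsum_congr hwg
    have h3 : ∑' i, g i ≤ (J : ℝ) * (2 * M / θ) + ε / 4 := hgsum_le
    have h4 := hhead
    rw [hg0] at h4
    linarith
  have hfinal : (2 * M + 4 * M * (J : ℝ)) / θ ≤ ε / 2 := by
    have hX : (2 * M + 4 * M * (J : ℝ)) * (2 / ε) ≤ θ := le_trans (le_max_right _ _) hs
    rw [div_le_iff₀ hθ0]
    have hpos : (0 : ℝ) < 2 * M + 4 * M * (J : ℝ) := by positivity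
    calc 2 * M + 4 * M * (J : ℝ)
        = (2 * M + 4 * M * (J : ℝ)) * (2 / ε) * (ε / 2) := by field_simp
      _ ≤ θ * (ε / 2) := by
          apply mul_le_mul_of_nonneg_right hX (by positivity)
      _ = ε / 2 * θ := by ring
  calc ‖∑' k : ℕ, d k / (s - Complex.I * (a : ℂ) * (((k : ℝ) + 1 : ℝ) : ℂ) ^ 2)‖
      ≤ ∑' k : ℕ, ‖d k / (s - Complex.I * (a : ℂ) * (((k : ℝ) + 1 : ℝ) : ℂ) ^ 2)‖ := by
        have := norm_tsum_le_tsum_norm (f := fun k : ℕ =>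
          d k / (s - Complex.I * (a : ℂ) * (((k : ℝ) + 1 : ℝ) : ℂ) ^ 2)) (by
            exact hnorm_sum)
        exact this
    _ ≤ ∑' k, w k := Summable.tsum_le_tsum hterm hnorm_sum hw_sum
    _ ≤ 2 * M / θ + 2 * ((J : ℝ) * (2 * M / θ) + ε / 4) := hwsum_le
    _ = (2 * M + 4 * M * (J : ℝ)) / θ + ε / 2 := by field_simp; ring
    _ ≤ ε / 2 + ε / 2 := by linarith [hfinal]
    _ = ε := by ring
end

section
/- Let σ ∈ ℂ with σ ≠ 0 and let Λ : C([0,1], ℂ) → ℂ be a linear map. Then the following are equivalent: (1) Λ(x ↦ cosh(σx)) ≠ 0; (2) for every continuous ψ : [0,1] → ℂ and all a, b ∈ ℂ, there exists exactly one twice continuously differentiable m : [0,1] → ℂ satisfying m''(x) = σ²·m(x) - i·ψ(x) for all x ∈ [0,1], m'(0) = a, and Λ(m) = b. -/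
open Set intervalIntegral MeasureTheory

private lemma expR_hasDerivAt (τ : ℂ) (z : ℝ) :
    HasDerivAt (fun x : ℝ => Complex.exp (τ * x)) (τ * Complex.exp (τ * z)) z := by
  have h1 : HasDerivAt (fun w : ℂ => Complex.exp (τ * w)) (Complex.exp (τ * z) * τ) (z : ℂ) :=
    (Complex.hasDerivAt_exp _).comp _ (by simpa using (hasDerivAt_id (z:ℂ)).const_mul τ)
  simpa [mul_comm] using h1.comp_ofReal

private lemma coshR_hasDerivAt (τ : ℂ) (z : ℝ) :
    HasDerivAt (fun x : ℝ => Complex.cosh (τ * x)) (τ * Complex.sinh (τ * z)) z := by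
  have h1 : HasDerivAt (fun w : ℂ => Complex.cosh (τ * w)) (Complex.sinh (τ * z) * τ) (z : ℂ) :=
    (Complex.hasDerivAt_cosh _).comp _ (by simpa using (hasDerivAt_id (z:ℂ)).const_mul τ)
  simpa [mul_comm] using h1.comp_ofReal

private lemma sinhR_hasDerivAt (τ : ℂ) (z : ℝ) :
    HasDerivAt (fun x : ℝ => Complex.sinh (τ * x)) (τ * Complex.cosh (τ * z)) z := by
  have h1 : HasDerivAt (fun w : ℂ => Complex.sinh (τ * w)) (Complex.cosh (τ * z) * τ) (z : ℂ) :=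
    (Complex.hasDerivAt_sinh _).comp _ (by simpa using (hasDerivAt_id (z:ℂ)).const_mul τ)
  simpa [mul_comm] using h1.comp_ofReal

/-- Any solution of `w'' = σ² w` on `[0,1]` with `w'(0) = 0` equals `w 0 · cosh (σ ·)`. -/
private lemma homog (σ : ℂ) (w : ℝ → ℂ) (hw : ContDiffOn ℝ 2 w (Icc (0:ℝ) 1))
    (hode : ∀ x ∈ Icc (0:ℝ) 1,
      derivWithin (derivWithin w (Icc (0:ℝ) 1)) (Icc (0:ℝ) 1) x = σ ^ 2 * w x)
    (h0 : derivWithin w (Icc (0:ℝ) 1) 0 = 0) :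
    ∀ x ∈ Icc (0:ℝ) 1, w x = w 0 * Complex.cosh (σ * x) := by
  set I : Set ℝ := Icc (0:ℝ) 1 with hIdef
  have hI : UniqueDiffOn ℝ I := uniqueDiffOn_Icc one_pos
  set dw : ℝ → ℂ := derivWithin w I with hdw
  have hdwC : ContDiffOn ℝ 1 dw I := hw.derivWithin hI (by norm_num)
  have hwd : DifferentiableOn ℝ w I := hw.differentiableOn (by norm_num)
  have hdwd : DifferentiableOn ℝ dw I := hdwC.differentiableOn (by norm_num)
  have hw' : ∀ x ∈ I, HasDerivWithinAt w (dw x) I x :=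
    fun x hx => (hwd x hx).hasDerivWithinAt
  have hdw' : ∀ x ∈ I, HasDerivWithinAt dw (σ ^ 2 * w x) I x := by
    intro x hx
    have := (hdwd x hx).hasDerivWithinAt
    rwa [derivWithin, ← derivWithin, hode x hx] at this
  set u : ℝ → ℂ := fun x => dw x + σ * w x with hu
  have hu' : ∀ x ∈ I, HasDerivWithinAt u (σ * u x) I x := by
    intro x hx
    have := (hdw' x hx).fun_add ((hw' x hx).const_mul σ)
    refine this.congr_deriv (Eq.symm ?_)
    simp only [hu]; ring
  set g : ℝ → ℂ := fun x => u x * Complex.exp (-σ * x) with hg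
  have hg' : ∀ x ∈ I, HasDerivWithinAt g 0 I x := by
    intro x hx
    have := (hu' x hx).fun_mul (expR_hasDerivAt (-σ) x).hasDerivWithinAt
    refine this.congr_deriv (Eq.symm ?_)
    ring
  have hgconst : ∀ x ∈ I, g x = g 0 := by
    refine constant_of_derivWithin_zero (fun x hx => (hg' x hx).differentiableWithinAt) ?_
    intro x hx
    exact (hg' x (Ico_subset_Icc_self hx)).derivWithin (hI x (Ico_subset_Icc_self hx))
  have hg0 : g 0 = σ * w 0 := by
    simp [hg, hu, h0]
  have huval : ∀ x ∈ I, u x = σ * w 0 * Complex.exp (σ * x) := by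
    intro x hx
    have h1 := hgconst x hx
    rw [hg0] at h1
    have h2 : u x * Complex.exp (-σ * x) * Complex.exp (σ * x)
        = σ * w 0 * Complex.exp (σ * x) := by
      rw [show u x * Complex.exp (-σ * x) = g x from rfl, h1]
    rwa [mul_assoc, ← Complex.exp_add, (by ring : -σ * x + σ * x = 0), Complex.exp_zero,
      mul_one] at h2
  set h : ℝ → ℂ := fun x => w x * Complex.exp (σ * x)
      - w 0 / 2 * Complex.exp ((2 * σ) * x) with hh
  have hh' : ∀ x ∈ I, HasDerivWithinAt h 0 I x := by
    intro x hx
    have := ((hw' x hx).fun_mul (expR_hasDerivAt σ x).hasDerivWithinAt).fun_sub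
      (((expR_hasDerivAt (2 * σ) x).hasDerivWithinAt).const_mul (w 0 / 2))
    refine this.congr_deriv (Eq.symm ?_)
    have he : Complex.exp ((2 * σ) * x) = Complex.exp (σ * x) * Complex.exp (σ * x) := by
      rw [← Complex.exp_add]; ring_nf
    have := huval x hx
    rw [hu] at this
    rw [he]
    linear_combination (-(Complex.exp (σ * x) : ℂ)) * this
  have hhconst : ∀ x ∈ I, h x = h 0 := by
    refine constant_of_derivWithin_zero (fun x hx => (hh' x hx).differentiableWithinAt) ?_
    intro x hx
    exact (hh' x (Ico_subset_Icc_self hx)).derivWithin (hI x (Ico_subset_Icc_self hx))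
  intro x hx
  have h1 := hhconst x hx
  have hE : Complex.exp (σ * x) ≠ 0 := Complex.exp_ne_zero _
  have h0e : h 0 = w 0 / 2 := by simp [hh]; ring
  rw [h0e] at h1
  simp only [hh] at h1
  have he : Complex.exp ((2 * σ) * x) = Complex.exp (σ * x) * Complex.exp (σ * x) := by
    rw [← Complex.exp_add]; ring_nf
  rw [he] at h1
  have hcosh : Complex.cosh (σ * x) = (Complex.exp (σ * x) + (Complex.exp (σ * x))⁻¹) / 2 := by
    rw [Complex.cosh, Complex.exp_neg]
  rw [hcosh]
  field_simp at h1 ⊢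
  linear_combination h1

/-- Particular solution of `m'' = σ² m + φ` with `m'(0) = a`, globally on `ℝ`. -/
private lemma exist_part (σ : ℂ) (hσ : σ ≠ 0) (φ : ℝ → ℂ) (hφ : Continuous φ) (a : ℂ) :
    ∃ m : ℝ → ℂ, ContDiff ℝ 2 m ∧ (∀ x, deriv (deriv m) x = σ ^ 2 * m x + φ x)
      ∧ deriv m 0 = a := by
  set A : ℝ → ℂ := fun x => ∫ t in (0:ℝ)..x, Complex.cosh (σ * t) * φ t with hA
  set B : ℝ → ℂ := fun x => ∫ t in (0:ℝ)..x, Complex.sinh (σ * t) * φ t with hB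
  have hcA : Continuous fun t : ℝ => Complex.cosh (σ * t) * φ t :=
    ((Complex.continuous_cosh.comp (continuous_const.mul Complex.continuous_ofReal)).mul hφ)
  have hcB : Continuous fun t : ℝ => Complex.sinh (σ * t) * φ t :=
    ((Complex.continuous_sinh.comp (continuous_const.mul Complex.continuous_ofReal)).mul hφ)
  have hA' : ∀ x : ℝ, HasDerivAt A (Complex.cosh (σ * x) * φ x) x := fun x =>
    integral_hasDerivAt_right (hcA.intervalIntegrable _ _)
      (hcA.stronglyMeasurableAtFilter _ _) hcA.continuousAt
  have hB' : ∀ x : ℝ, HasDerivAt B (Complex.sinh (σ * x) * φ x) x := fun x =>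
    integral_hasDerivAt_right (hcB.intervalIntegrable _ _)
      (hcB.stronglyMeasurableAtFilter _ _) hcB.continuousAt
  set m : ℝ → ℂ := fun x =>
    (a * Complex.sinh (σ * x) + (Complex.sinh (σ * x) * A x - Complex.cosh (σ * x) * B x)) / σ
    with hm
  set m1 : ℝ → ℂ := fun x =>
    a * Complex.cosh (σ * x) + (Complex.cosh (σ * x) * A x - Complex.sinh (σ * x) * B x)
    with hm1
  set m2 : ℝ → ℂ := fun x =>
    σ * (a * Complex.sinh (σ * x) + (Complex.sinh (σ * x) * A x - Complex.cosh (σ * x) * B x))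
      + φ x with hm2
  have hm' : ∀ x, HasDerivAt m (m1 x) x := by
    intro x
    have h1 := ((((sinhR_hasDerivAt σ x).const_mul a).fun_add
      (((sinhR_hasDerivAt σ x).fun_mul (hA' x)).fun_sub
        ((coshR_hasDerivAt σ x).fun_mul (hB' x)))).div_const σ)
    refine h1.congr_deriv (Eq.symm ?_)
    have hid : Complex.cosh (σ * x) ^ 2 - Complex.sinh (σ * x) ^ 2 = 1 :=
      Complex.cosh_sq_sub_sinh_sq _
    field_simp [hm1]
    ring
  have hm1' : ∀ x, HasDerivAt m1 (m2 x) x := by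
    intro x
    have h1 := (((coshR_hasDerivAt σ x).const_mul a).fun_add
      (((coshR_hasDerivAt σ x).fun_mul (hA' x)).fun_sub
        ((sinhR_hasDerivAt σ x).fun_mul (hB' x))))
    refine h1.congr_deriv (Eq.symm ?_)
    have hid : Complex.cosh (σ * x) ^ 2 - Complex.sinh (σ * x) ^ 2 = 1 :=
      Complex.cosh_sq_sub_sinh_sq _
    simp only [hm2]
    linear_combination (-(φ x)) * hid
  have hm2c : Continuous m2 := by
    refine (continuous_const.mul ?_).add hφ
    exact (continuous_const.mul
        (Complex.continuous_sinh.comp (continuous_const.mul Complex.continuous_ofReal))).add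
      (((Complex.continuous_sinh.comp (continuous_const.mul Complex.continuous_ofReal)).mul
          (continuous_iff_continuousAt.2 fun y => (hA' y).continuousAt)).sub
        ((Complex.continuous_cosh.comp (continuous_const.mul Complex.continuous_ofReal)).mul
          (continuous_iff_continuousAt.2 fun y => (hB' y).continuousAt)))
  have hdm : deriv m = m1 := funext fun x => (hm' x).deriv
  have hdm1 : deriv m1 = m2 := funext fun x => (hm1' x).deriv
  refine ⟨m, ?_, ?_, ?_⟩
  · rw [show (2 : WithTop ℕ∞) = 1 + 1 by norm_num, contDiff_succ_iff_deriv]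
    refine ⟨fun x => (hm' x).differentiableAt, by simp, ?_⟩
    rw [hdm, contDiff_one_iff_deriv]
    exact ⟨fun x => (hm1' x).differentiableAt, hdm1 ▸ hm2c⟩
  · intro x
    rw [hdm, hdm1]
    simp only [hm2, hm]
    field_simp
  · rw [hdm]
    simp [hm1, hA, hB]

private lemma deriv_differentiable_of_contDiff2 {f : ℝ → ℂ} (hf : ContDiff ℝ 2 f) :
    Differentiable ℝ (deriv f) := by
  rw [show (2 : WithTop ℕ∞) = 1 + 1 by norm_num, contDiff_succ_iff_deriv] at hf
  exact hf.2.2.differentiable (by norm_num)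

/-- The restriction of a function `ℝ → ℂ` that is continuous on `[0,1]` to a continuous
map on `[0,1]`. -/
noncomputable def restrictIcc (m : ℝ → ℂ) (h : ContinuousOn m (Set.Icc (0:ℝ) 1)) :
    C(Set.Icc (0:ℝ) 1, ℂ) :=
  ⟨(Set.Icc (0:ℝ) 1).restrict m, h.restrict⟩

/-- Scalar form of Lemma 4.6: for a linear functional `Λ` on `C([0,1],ℂ)` and `σ ≠ 0`,
`Λ(cosh(σ·)) ≠ 0` iff for every continuous `ψ` and all `a, b ∈ ℂ` there is exactly one
twice continuously differentiable `m` with `m'' = σ² m - i ψ`, `m'(0) = a`, `Λ(m) = b`. -/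
theorem stmt_14 (σ : ℂ) (hσ : σ ≠ 0) (Λ : C(Set.Icc (0:ℝ) 1, ℂ) →ₗ[ℂ] ℂ) :
    (Λ (restrictIcc (fun x : ℝ => Complex.cosh (σ * (x : ℂ)))
        ((Complex.continuous_cosh.comp
          (continuous_const.mul Complex.continuous_ofReal)).continuousOn)) ≠ 0)
    ↔ ∀ ψ : ℝ → ℂ, ContinuousOn ψ (Set.Icc 0 1) → ∀ a b : ℂ,
        ∃ m : ℝ → ℂ, ∃ hm : ContDiffOn ℝ 2 m (Set.Icc 0 1),
          ((∀ x ∈ Set.Icc (0:ℝ) 1,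
              derivWithin (derivWithin m (Set.Icc 0 1)) (Set.Icc 0 1) x
                = σ ^ 2 * m x - Complex.I * ψ x)
            ∧ derivWithin m (Set.Icc 0 1) 0 = a
            ∧ Λ (restrictIcc m hm.continuousOn) = b)
          ∧ ∀ m₂ : ℝ → ℂ, ∀ hm₂ : ContDiffOn ℝ 2 m₂ (Set.Icc 0 1),
              (∀ x ∈ Set.Icc (0:ℝ) 1,
                derivWithin (derivWithin m₂ (Set.Icc 0 1)) (Set.Icc 0 1) x
                  = σ ^ 2 * m₂ x - Complex.I * ψ x) →
              derivWithin m₂ (Set.Icc 0 1) 0 = a →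
              Λ (restrictIcc m₂ hm₂.continuousOn) = b →
              ∀ x ∈ Set.Icc (0:ℝ) 1, m₂ x = m x := by
  have hI : UniqueDiffOn ℝ (Icc (0:ℝ) 1) := uniqueDiffOn_Icc one_pos
  have h0mem : (0:ℝ) ∈ Icc (0:ℝ) 1 := ⟨le_refl 0, zero_le_one⟩
  have coshCD : ContDiff ℝ 2 (fun x : ℝ => Complex.cosh (σ * (x:ℂ))) :=
    (Complex.contDiff_cosh.restrict_scalars ℝ).comp
      (contDiff_const.mul Complex.ofRealCLM.contDiff)
  -- derivWithin = deriv on Icc for globally differentiable functions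
  have dwd : ∀ f : ℝ → ℂ, Differentiable ℝ f → ∀ x ∈ Icc (0:ℝ) 1,
      derivWithin f (Icc (0:ℝ) 1) x = deriv f x :=
    fun f hf x hx => (hf x).derivWithin (hI x hx)
  have dwd2 : ∀ f : ℝ → ℂ, Differentiable ℝ f → Differentiable ℝ (deriv f) →
      ∀ x ∈ Icc (0:ℝ) 1,
      derivWithin (derivWithin f (Icc (0:ℝ) 1)) (Icc (0:ℝ) 1) x = deriv (deriv f) x := by
    intro f hf hdf x hx
    rw [derivWithin_congr (fun y hy => dwd f hf y hy) (dwd f hf x hx)]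
    exact (hdf x).derivWithin (hI x hx)
  -- derivWithin facts for coshfun
  have hcosh1 : ∀ x ∈ Icc (0:ℝ) 1,
      derivWithin (fun y : ℝ => Complex.cosh (σ * (y:ℂ))) (Icc (0:ℝ) 1) x
        = σ * Complex.sinh (σ * x) := by
    intro x hx
    rw [dwd _ (coshCD.differentiable (by norm_num)) x hx]
    exact (coshR_hasDerivAt σ x).deriv
  have hcosh2 : ∀ x ∈ Icc (0:ℝ) 1,
      derivWithin (derivWithin (fun y : ℝ => Complex.cosh (σ * (y:ℂ))) (Icc (0:ℝ) 1))
        (Icc (0:ℝ) 1) x = σ ^ 2 * Complex.cosh (σ * x) := by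
    intro x hx
    rw [derivWithin_congr (fun y hy => hcosh1 y hy) (hcosh1 x hx)]
    rw [(((sinhR_hasDerivAt σ x).const_mul σ).differentiableAt).derivWithin (hI x hx),
      (((sinhR_hasDerivAt σ x)).const_mul σ).deriv]
    ring
  constructor
  · -- hard direction
    intro hL ψ hψ a b
    set φ : ℝ → ℂ := fun x => -Complex.I * Set.IccExtend zero_le_one ((Icc (0:ℝ) 1).restrict ψ) x
      with hφdef
    have hφc : Continuous φ := continuous_const.mul (Continuous.Icc_extend' hψ.restrict)
    have hφeq : ∀ x ∈ Icc (0:ℝ) 1, φ x = -Complex.I * ψ x := by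
      intro x hx
      simp only [hφdef, Set.IccExtend_of_mem _ _ hx, Set.restrict_apply]
      rfl
    obtain ⟨m₀, hm₀, hm₀ode, hm₀d0⟩ := exist_part σ hσ φ hφc a
    have hm₀diff : Differentiable ℝ m₀ := hm₀.differentiable (by norm_num)
    have hdm₀diff : Differentiable ℝ (deriv m₀) := deriv_differentiable_of_contDiff2 hm₀
    set L : ℂ := Λ (restrictIcc (fun x : ℝ => Complex.cosh (σ * (x : ℂ)))
        ((Complex.continuous_cosh.comp
          (continuous_const.mul Complex.continuous_ofReal)).continuousOn)) with hLdef
    set c : ℂ := (b - Λ (restrictIcc m₀ hm₀.continuous.continuousOn)) / L with hcdef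
    set m : ℝ → ℂ := fun x => m₀ x + c * Complex.cosh (σ * (x:ℂ)) with hmdef
    have hmCD : ContDiff ℝ 2 m := hm₀.add (contDiff_const.mul coshCD)
    have hmd : ∀ x : ℝ, deriv m x = deriv m₀ x + c * (σ * Complex.sinh (σ * x)) := fun x =>
      ((hm₀diff x).hasDerivAt.add ((coshR_hasDerivAt σ x).const_mul c)).deriv
    have hmdd : ∀ x : ℝ, deriv (deriv m) x
        = deriv (deriv m₀) x + c * (σ ^ 2 * Complex.cosh (σ * x)) := by
      intro x
      rw [funext hmd]
      rw [((hdm₀diff x).hasDerivAt.fun_add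
        (((sinhR_hasDerivAt σ x).const_mul σ).const_mul c)).deriv]
      ring
    have hODEm : ∀ x ∈ Icc (0:ℝ) 1,
        derivWithin (derivWithin m (Icc (0:ℝ) 1)) (Icc (0:ℝ) 1) x
          = σ ^ 2 * m x - Complex.I * ψ x := by
      intro x hx
      rw [dwd2 m (hmCD.differentiable (by norm_num)) (deriv_differentiable_of_contDiff2 hmCD)
        x hx, hmdd x, hm₀ode x, hφeq x hx]
      simp only [hmdef]
      ring
    have hD0m : derivWithin m (Icc (0:ℝ) 1) 0 = a := by
      rw [dwd m (hmCD.differentiable (by norm_num)) 0 h0mem, hmd 0]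
      simp [hm₀d0]
    have hΛm : Λ (restrictIcc m hmCD.continuous.continuousOn) = b := by
      have hsplit : restrictIcc m hmCD.continuous.continuousOn
          = restrictIcc m₀ hm₀.continuous.continuousOn
            + c • restrictIcc (fun x : ℝ => Complex.cosh (σ * (x : ℂ)))
              ((Complex.continuous_cosh.comp
                (continuous_const.mul Complex.continuous_ofReal)).continuousOn) := by
        ext p
        simp [restrictIcc, hmdef]
        rfl
      rw [hsplit, map_add, Λ.map_smul, smul_eq_mul, ← hLdef, hcdef]
      field_simp
      ring
    refine ⟨m, hmCD.contDiffOn, ⟨hODEm, hD0m, hΛm⟩, ?_⟩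
    intro m₂ hm₂ hode₂ hd0₂ hΛ₂ x hx
    have hwC : ContDiffOn ℝ 2 (fun y => m₂ y - m y) (Icc (0:ℝ) 1) := hm₂.sub hmCD.contDiffOn
    have hwd1 : ∀ y ∈ Icc (0:ℝ) 1, derivWithin (fun y => m₂ y - m y) (Icc (0:ℝ) 1) y
        = derivWithin m₂ (Icc (0:ℝ) 1) y - derivWithin m (Icc (0:ℝ) 1) y := fun y hy =>
      derivWithin_fun_sub
        (hm₂.differentiableOn (by norm_num) y hy)
        ((hmCD.differentiable (by norm_num) y).differentiableWithinAt)
    have hw0 : derivWithin (fun y => m₂ y - m y) (Icc (0:ℝ) 1) 0 = 0 := by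
      rw [hwd1 0 h0mem, hd0₂, hD0m, sub_self]
    have hwode : ∀ y ∈ Icc (0:ℝ) 1,
        derivWithin (derivWithin (fun y => m₂ y - m y) (Icc (0:ℝ) 1)) (Icc (0:ℝ) 1) y
          = σ ^ 2 * (m₂ y - m y) := by
      intro y hy
      rw [derivWithin_congr (fun z hz => hwd1 z hz) (hwd1 y hy)]
      rw [derivWithin_fun_sub
        ((hm₂.derivWithin hI (by norm_num : (1:WithTop ℕ∞) + 1 ≤ 2)).differentiableOn
          (by norm_num) y hy)
        ((hmCD.contDiffOn.derivWithin hI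
          (by norm_num : (1:WithTop ℕ∞) + 1 ≤ 2)).differentiableOn (by norm_num) y hy)]
      rw [hode₂ y hy, hODEm y hy]
      ring
    have hhom := homog σ _ hwC hwode hw0
    have hsplit2 : restrictIcc m₂ hm₂.continuousOn
        = restrictIcc m hmCD.continuous.continuousOn
          + (m₂ 0 - m 0) • restrictIcc (fun x : ℝ => Complex.cosh (σ * (x : ℂ)))
            ((Complex.continuous_cosh.comp
              (continuous_const.mul Complex.continuous_ofReal)).continuousOn) := by
      ext p
      have hp : m₂ p.1 - m p.1 = (m₂ 0 - m 0) * Complex.cosh (σ * p.1) := hhom p.1 p.2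
      simp only [restrictIcc, ContinuousMap.add_apply, ContinuousMap.coe_mk,
        ContinuousMap.smul_apply, Set.restrict_apply, smul_eq_mul]
      show m₂ p.1 = m p.1 + (m₂ 0 - m 0) * Complex.cosh (σ * p.1)
      linear_combination hp
    have hzero : (m₂ 0 - m 0) * L = 0 := by
      have h3 := hΛ₂
      rw [hsplit2, map_add, Λ.map_smul, smul_eq_mul, ← hLdef, hΛm] at h3
      linear_combination h3
    have h00 : m₂ 0 - m 0 = 0 := by
      rcases mul_eq_zero.mp hzero with h | h
      · exact h
      · exact absurd h hL
    have h4 : m₂ x - m x = (m₂ 0 - m 0) * Complex.cosh (σ * x) := hhom x hx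
    rw [h00, zero_mul] at h4
    exact sub_eq_zero.mp h4
  · -- easy direction
    intro h hL0
    obtain ⟨m, hm, ⟨hode, hd0, hΛ⟩, huniq⟩ := h (fun _ => 0) continuousOn_const 0 0
    have hcoshsol := huniq (fun x : ℝ => Complex.cosh (σ * (x:ℂ))) coshCD.contDiffOn
      (by
        intro x hx
        rw [hcosh2 x hx]
        simp)
      (by
        rw [hcosh1 0 h0mem]
        simp)
      (by
        have : restrictIcc (fun x : ℝ => Complex.cosh (σ * (x:ℂ)))
            (coshCD.contDiffOn.continuousOn)
            = restrictIcc (fun x : ℝ => Complex.cosh (σ * (x : ℂ)))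
              ((Complex.continuous_cosh.comp
                (continuous_const.mul Complex.continuous_ofReal)).continuousOn) := rfl
        rw [this, hL0])
    have hzerosol := huniq (fun _ => 0) contDiffOn_const
      (by
        intro x hx
        have hz : ∀ y ∈ Icc (0:ℝ) 1,
            derivWithin (fun _ : ℝ => (0:ℂ)) (Icc (0:ℝ) 1) y = 0 :=
          fun y hy => by simp
        rw [derivWithin_congr (fun z hz' => hz z hz') (hz x hx), hz x hx]
        simp)
      (by simp)
      (by
        have : restrictIcc (fun _ : ℝ => (0:ℂ))
            (contDiffOn_const (c := (0:ℂ)) : ContDiffOn ℝ 2 _ (Icc (0:ℝ) 1)).continuousOn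
            = (0 : C(Icc (0:ℝ) 1, ℂ)) := by
          ext p; simp [restrictIcc]; rfl
        rw [this, map_zero])
    have h1 := hcoshsol 0 h0mem
    have h2 := hzerosol 0 h0mem
    rw [← h2] at h1
    simp at h1
end

section
/- Let σ ∈ ℂ with σ ≠ 0. Then the following are equivalent: (1) sinh(σ) ≠ 0; (2) for every continuous ψ : [0,1] → ℂ and every a ∈ ℂ, there exists exactly one twice continuously differentiable n : [0,1] → ℂ satisfying n''(x) = σ²·n(x) + ψ(x) for all x ∈ [0,1], n'(0) = a, and n'(1) = 0. -/
open Set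

private lemma hasDerivAt_coshC (σ : ℂ) (x : ℝ) :
    HasDerivAt (fun y : ℝ => Complex.cosh (σ * y)) (σ * Complex.sinh (σ * x)) x := by
  have h := (Complex.hasDerivAt_cosh (σ * (x:ℂ))).comp (x:ℂ)
    ((hasDerivAt_id (x:ℂ)).const_mul σ)
  have h2 : HasDerivAt (fun z : ℂ => Complex.cosh (σ * z)) (σ * Complex.sinh (σ * x)) (x:ℂ) := by
    refine h.congr_deriv (Eq.symm ?_); ring
  exact h2.comp_ofReal

private lemma hasDerivAt_sinhC (σ : ℂ) (x : ℝ) :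
    HasDerivAt (fun y : ℝ => Complex.sinh (σ * y)) (σ * Complex.cosh (σ * x)) x := by
  have h := (Complex.hasDerivAt_sinh (σ * (x:ℂ))).comp (x:ℂ)
    ((hasDerivAt_id (x:ℂ)).const_mul σ)
  have h2 : HasDerivAt (fun z : ℂ => Complex.sinh (σ * z)) (σ * Complex.cosh (σ * x)) (x:ℂ) := by
    refine h.congr_deriv (Eq.symm ?_); ring
  exact h2.comp_ofReal

/-- Existence of a global solution with prescribed derivative boundary values. -/
private lemma exists_global (σ : ℂ) (hσ : σ ≠ 0) (hs : Complex.sinh σ ≠ 0)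
    (ψ : ℝ → ℂ) (hψ : Continuous ψ) (a : ℂ) :
    ∃ n : ℝ → ℂ, ContDiff ℝ 2 n ∧ (∀ x : ℝ, deriv (deriv n) x = σ ^ 2 * n x + ψ x) ∧
      deriv n 0 = a ∧ deriv n 1 = 0 := by
  set F : ℝ → ℂ := fun u => ∫ t in (0:ℝ)..u, Complex.cosh (σ * t) * ψ t with hFdef
  set G : ℝ → ℂ := fun u => ∫ t in (0:ℝ)..u, Complex.sinh (σ * t) * ψ t with hGdef
  have hcF : Continuous fun t : ℝ => Complex.cosh (σ * t) * ψ t := by fun_prop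
  have hcG : Continuous fun t : ℝ => Complex.sinh (σ * t) * ψ t := by fun_prop
  have hF : ∀ x : ℝ, HasDerivAt F (Complex.cosh (σ * x) * ψ x) x := fun x =>
    intervalIntegral.integral_hasDerivAt_right (hcF.intervalIntegrable 0 x)
      hcF.aestronglyMeasurable.stronglyMeasurableAtFilter hcF.continuousAt
  have hG : ∀ x : ℝ, HasDerivAt G (Complex.sinh (σ * x) * ψ x) x := fun x =>
    intervalIntegral.integral_hasDerivAt_right (hcG.intervalIntegrable 0 x)
      hcG.aestronglyMeasurable.stronglyMeasurableAtFilter hcG.continuousAt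
  set β : ℂ := a / σ with hβdef
  set α : ℂ := -(a * Complex.cosh σ + Complex.cosh σ * F 1 - Complex.sinh σ * G 1) /
      (σ * Complex.sinh σ) with hαdef
  set n : ℝ → ℂ := fun x => α * Complex.cosh (σ * x) + β * Complex.sinh (σ * x) +
      σ⁻¹ * (Complex.sinh (σ * x) * F x - Complex.cosh (σ * x) * G x) with hndef
  set n1 : ℝ → ℂ := fun x => α * σ * Complex.sinh (σ * x) + β * σ * Complex.cosh (σ * x) +
      Complex.cosh (σ * x) * F x - Complex.sinh (σ * x) * G x with hn1def
  have hn : ∀ x : ℝ, HasDerivAt n (n1 x) x := by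
    intro x
    have h := (((hasDerivAt_coshC σ x).const_mul α).add
        ((hasDerivAt_sinhC σ x).const_mul β)).add
      ((((hasDerivAt_sinhC σ x).mul (hF x)).sub
        ((hasDerivAt_coshC σ x).mul (hG x))).const_mul σ⁻¹)
    refine h.congr_deriv (Eq.symm ?_)
    rw [hn1def]
    field_simp
    ring
  have hn1 : ∀ x : ℝ, HasDerivAt n1 (σ ^ 2 * n x + ψ x) x := by
    intro x
    have h := ((((hasDerivAt_sinhC σ x).const_mul (α * σ)).add
        ((hasDerivAt_coshC σ x).const_mul (β * σ))).add
      ((hasDerivAt_coshC σ x).mul (hF x))).sub ((hasDerivAt_sinhC σ x).mul (hG x))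
    refine h.congr_deriv (Eq.symm ?_)
    have key := Complex.cosh_sq_sub_sinh_sq (σ * x)
    rw [hndef]
    field_simp
    linear_combination (-ψ x) * key
  have hderiv : deriv n = n1 := funext fun x => (hn x).deriv
  have hderiv1 : deriv n1 = fun x => σ ^ 2 * n x + ψ x := funext fun x => (hn1 x).deriv
  have hcont_n : Continuous n := Differentiable.continuous (fun x => (hn x).differentiableAt)
  refine ⟨n, ?_, ?_, ?_, ?_⟩
  · rw [show (2 : WithTop ℕ∞) = 1 + 1 from rfl, contDiff_succ_iff_deriv]
    refine ⟨fun x => (hn x).differentiableAt, by simp, ?_⟩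
    rw [hderiv, contDiff_one_iff_deriv]
    refine ⟨fun x => (hn1 x).differentiableAt, ?_⟩
    rw [hderiv1]
    exact (continuous_const.mul hcont_n).add hψ
  · intro x
    rw [hderiv, hderiv1]
  · rw [hderiv, hn1def]
    simp only [Complex.ofReal_zero, mul_zero, Complex.sinh_zero, Complex.cosh_zero, mul_one,
      intervalIntegral.integral_same, hFdef, hGdef, hβdef]
    rw [zero_add, add_zero, sub_zero]
    exact div_mul_cancel₀ a hσ
  · rw [hderiv, hn1def]
    simp only [Complex.ofReal_one, mul_one, hαdef, hβdef]
    field_simp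
    ring

private lemma derivs_of_contDiffOn (f : ℝ → ℂ) (h : ContDiffOn ℝ 2 f (Icc 0 1)) :
    (∀ x ∈ Icc (0:ℝ) 1, HasDerivWithinAt f (derivWithin f (Icc 0 1) x) (Icc 0 1) x) ∧
    (∀ x ∈ Icc (0:ℝ) 1, HasDerivWithinAt (derivWithin f (Icc 0 1))
        (derivWithin (derivWithin f (Icc 0 1)) (Icc 0 1) x) (Icc 0 1) x) ∧
    ContinuousOn (derivWithin f (Icc 0 1)) (Icc 0 1) := by
  have hu : UniqueDiffOn ℝ (Icc (0:ℝ) 1) := uniqueDiffOn_Icc zero_lt_one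
  have h' : ContDiffOn ℝ ((1:ℕ) + 1) f (Icc 0 1) := by exact_mod_cast h
  rw [contDiffOn_succ_iff_derivWithin hu] at h'
  obtain ⟨hd, -, hC1⟩ := h'
  have hd1 : DifferentiableOn ℝ (derivWithin f (Icc 0 1)) (Icc 0 1) :=
    hC1.differentiableOn (by simp)
  exact ⟨fun x hx => (hd x hx).hasDerivWithinAt,
    fun x hx => (hd1 x hx).hasDerivWithinAt, hd1.continuousOn⟩

private lemma uniq (σ : ℂ) (hσ : σ ≠ 0) (hs : Complex.sinh σ ≠ 0) (ψ : ℝ → ℂ) (a : ℂ)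
    (n : ℝ → ℂ) (hn : ContDiffOn ℝ 2 n (Icc 0 1))
    (hnode : ∀ x ∈ Icc (0:ℝ) 1,
      derivWithin (derivWithin n (Icc 0 1)) (Icc 0 1) x = σ ^ 2 * n x + ψ x)
    (hn0 : derivWithin n (Icc 0 1) 0 = a) (hn1 : derivWithin n (Icc 0 1) 1 = 0)
    (n₂ : ℝ → ℂ) (hm : ContDiffOn ℝ 2 n₂ (Icc 0 1))
    (hmode : ∀ x ∈ Icc (0:ℝ) 1,
      derivWithin (derivWithin n₂ (Icc 0 1)) (Icc 0 1) x = σ ^ 2 * n₂ x + ψ x)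
    (hm0 : derivWithin n₂ (Icc 0 1) 0 = a) (hm1 : derivWithin n₂ (Icc 0 1) 1 = 0) :
    ∀ x ∈ Icc (0:ℝ) 1, n₂ x = n x := by
  obtain ⟨hdn, hdn', hcn⟩ := derivs_of_contDiffOn n hn
  obtain ⟨hdm, hdm', hcm⟩ := derivs_of_contDiffOn n₂ hm
  set dn : ℝ → ℂ := derivWithin n (Icc 0 1)
  set dm : ℝ → ℂ := derivWithin n₂ (Icc 0 1)
  set A : ℂ := n₂ 0 - n 0 with hA
  set v : ℝ → ℂ × ℂ → ℂ × ℂ := fun t p => (p.2, σ ^ 2 * p.1 + ψ t) with hv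
  set L : (ℂ × ℂ) →L[ℂ] (ℂ × ℂ) :=
    (ContinuousLinearMap.snd ℂ ℂ ℂ).prod ((σ ^ 2) • ContinuousLinearMap.fst ℂ ℂ ℂ) with hL
  have hvL : ∀ t p, v t p = L p + ((0 : ℂ), ψ t) := by
    intro t p
    simp [hv, hL, Prod.ext_iff, smul_eq_mul]
  have hlip : ∀ t, LipschitzWith ‖L‖₊ (v t) := fun t =>
    LipschitzWith.of_dist_le_mul fun p q => by
      rw [hvL, hvL, dist_add_right]
      exact L.lipschitz.dist_le_mul p q
  set f : ℝ → ℂ × ℂ := fun t => (n₂ t, dm t) with hf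
  set g : ℝ → ℂ × ℂ := fun t => (n t + A * Complex.cosh (σ * t),
    dn t + A * σ * Complex.sinh (σ * t)) with hg
  have hmem : ∀ t ∈ Ico (0:ℝ) 1, Icc (0:ℝ) 1 ∈ nhdsWithin t (Ici t) := fun t ht =>
    Icc_mem_nhdsGE_of_mem ht
  have hf' : ∀ t ∈ Ico (0:ℝ) 1, HasDerivWithinAt f (v t (f t)) (Ici t) t := by
    intro t ht
    have ht' : t ∈ Icc (0:ℝ) 1 := Ico_subset_Icc_self ht
    have h1 := (hdm t ht').mono_of_mem_nhdsWithin (hmem t ht)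
    have h2 := (hdm' t ht').mono_of_mem_nhdsWithin (hmem t ht)
    rw [hmode t ht'] at h2
    exact h1.prodMk h2
  have hg' : ∀ t ∈ Ico (0:ℝ) 1, HasDerivWithinAt g (v t (g t)) (Ici t) t := by
    intro t ht
    have ht' : t ∈ Icc (0:ℝ) 1 := Ico_subset_Icc_self ht
    have c1 : HasDerivWithinAt (fun t : ℝ => n t + A * Complex.cosh (σ * t))
        (dn t + A * (σ * Complex.sinh (σ * t))) (Ici t) t :=
      ((hdn t ht').mono_of_mem_nhdsWithin (hmem t ht)).add
        (((hasDerivAt_coshC σ t).const_mul A).hasDerivWithinAt)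
    have h2 := (hdn' t ht').mono_of_mem_nhdsWithin (hmem t ht)
    rw [hnode t ht'] at h2
    have c2 : HasDerivWithinAt (fun t : ℝ => dn t + A * σ * Complex.sinh (σ * t))
        ((σ ^ 2 * n t + ψ t) + A * σ * (σ * Complex.cosh (σ * t))) (Ici t) t :=
      h2.add (((hasDerivAt_sinhC σ t).const_mul (A * σ)).hasDerivWithinAt)
    have h3 := c1.prodMk c2
    convert h3 using 1
    simp only [hv, hg, Prod.mk.injEq]
    constructor <;> ring
  have hfc : ContinuousOn f (Icc (0:ℝ) 1) := (hm.continuousOn).prodMk hcm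
  have hgc : ContinuousOn g (Icc (0:ℝ) 1) := by
    have hc1 : Continuous fun t : ℝ => A * Complex.cosh (σ * t) := by fun_prop
    have hc2 : Continuous fun t : ℝ => A * σ * Complex.sinh (σ * t) := by fun_prop
    exact ((hn.continuousOn).add hc1.continuousOn).prodMk (hcn.add hc2.continuousOn)
  have ha : f 0 = g 0 := by
    simp only [hf, hg, Prod.mk.injEq, Complex.ofReal_zero, mul_zero, Complex.cosh_zero,
      Complex.sinh_zero, mul_one, hA, hm0, hn0]
    constructor <;> ring
  have heq : EqOn f g (Icc (0:ℝ) 1) :=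
    ODE_solution_unique_of_mem_Icc_right (v := v) (s := fun _ => univ)
      (fun t _ => (hlip t).lipschitzOnWith) hfc hf' (fun t _ => mem_univ _)
      hgc hg' (fun t _ => mem_univ _) ha
  have hA0 : A = 0 := by
    have h1 := congrArg Prod.snd (heq (right_mem_Icc.mpr zero_le_one))
    simp only [hf, hg, Complex.ofReal_one, mul_one, hm1, hn1, zero_add] at h1
    rcases mul_eq_zero.mp h1.symm with h | h
    · rcases mul_eq_zero.mp h with h' | h'
      · exact h'
      · exact absurd h' hσ
    · exact absurd h hs
  intro x hx
  have h1 := congrArg Prod.fst (heq hx)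
  simp only [hf, hg, hA0, zero_mul, add_zero] at h1
  exact h1

/-- Scalar form of Lemma 5.1: for `σ ≠ 0`, `sinh σ ≠ 0` iff for every continuous `ψ` and
every `a ∈ ℂ` there is exactly one twice continuously differentiable `n` with
`n'' = σ² n + ψ`, `n'(0) = a`, `n'(1) = 0`. -/
theorem stmt_15 (σ : ℂ) (hσ : σ ≠ 0) :
    Complex.sinh σ ≠ 0
    ↔ ∀ ψ : ℝ → ℂ, ContinuousOn ψ (Set.Icc 0 1) → ∀ a : ℂ,
        ∃ n : ℝ → ℂ,
          (ContDiffOn ℝ 2 n (Set.Icc 0 1)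
            ∧ (∀ x ∈ Set.Icc (0:ℝ) 1,
                derivWithin (derivWithin n (Set.Icc 0 1)) (Set.Icc 0 1) x
                  = σ ^ 2 * n x + ψ x)
            ∧ derivWithin n (Set.Icc 0 1) 0 = a
            ∧ derivWithin n (Set.Icc 0 1) 1 = 0)
          ∧ ∀ n₂ : ℝ → ℂ, ContDiffOn ℝ 2 n₂ (Set.Icc 0 1) →
              (∀ x ∈ Set.Icc (0:ℝ) 1,
                derivWithin (derivWithin n₂ (Set.Icc 0 1)) (Set.Icc 0 1) x
                  = σ ^ 2 * n₂ x + ψ x) →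
              derivWithin n₂ (Set.Icc 0 1) 0 = a →
              derivWithin n₂ (Set.Icc 0 1) 1 = 0 →
              ∀ x ∈ Set.Icc (0:ℝ) 1, n₂ x = n x := by
  have hu : UniqueDiffOn ℝ (Icc (0:ℝ) 1) := uniqueDiffOn_Icc zero_lt_one
  constructor
  · intro hs ψ hψ a
    set Ψ : ℝ → ℂ := IccExtend zero_le_one ((Icc (0:ℝ) 1).restrict ψ) with hΨdef
    have hΨ : Continuous Ψ := Continuous.Icc_extend' (hψ.restrict)
    have hΨeq : ∀ x ∈ Icc (0:ℝ) 1, Ψ x = ψ x := fun x hx => by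
      rw [hΨdef, IccExtend_of_mem _ _ hx]; rfl
    obtain ⟨n, hC, hode, h0, h1⟩ := exists_global σ hσ hs Ψ hΨ a
    have hC2 : ContDiff ℝ ((1:WithTop ℕ∞) + 1) n := hC
    obtain ⟨hdiff, -, hC1⟩ := contDiff_succ_iff_deriv.mp hC2
    have hdiff1 : Differentiable ℝ (deriv n) := hC1.differentiable one_ne_zero
    have hdw : ∀ x ∈ Icc (0:ℝ) 1, derivWithin n (Icc 0 1) x = deriv n x := fun x hx =>
      ((hdiff x).hasDerivAt.hasDerivWithinAt).derivWithin (hu x hx)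
    have hdw2 : ∀ x ∈ Icc (0:ℝ) 1,
        derivWithin (derivWithin n (Icc 0 1)) (Icc 0 1) x = σ ^ 2 * n x + ψ x := by
      intro x hx
      rw [derivWithin_congr (fun y hy => hdw y hy) (hdw x hx),
        ((hdiff1 x).hasDerivAt.hasDerivWithinAt).derivWithin (hu x hx), hode x, ← hΨeq x hx]
    have hdw0 : derivWithin n (Icc 0 1) 0 = a := by
      rw [hdw 0 (left_mem_Icc.mpr zero_le_one), h0]
    have hdw1 : derivWithin n (Icc 0 1) 1 = 0 := by
      rw [hdw 1 (right_mem_Icc.mpr zero_le_one), h1]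
    refine ⟨n, ⟨hC.contDiffOn, hdw2, hdw0, hdw1⟩, ?_⟩
    intro n₂ h₂C h₂ode h₂0 h₂1
    exact uniq σ hσ hs ψ a n hC.contDiffOn hdw2 hdw0 hdw1 n₂ h₂C h₂ode h₂0 h₂1
  · intro h
    by_contra hs0
    obtain ⟨n, ⟨hC, hode, h0, h1⟩, huniq⟩ := h (fun _ => 0) continuousOn_const 0
    obtain ⟨hdn, hdn', hcn⟩ := derivs_of_contDiffOn n hC
    set c : ℝ → ℂ := fun x => Complex.cosh (σ * x) with hcdef
    have hcC : ContDiff ℝ 2 c := by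
      have h1 : ContDiff ℝ 2 (fun x : ℝ => σ * (x : ℂ)) :=
        contDiff_const.mul Complex.ofRealCLM.contDiff
      exact ((Complex.contDiff_cosh.of_le le_top).restrict_scalars ℝ).comp h1
    set n₂ : ℝ → ℂ := fun x => n x + c x with hn₂def
    have hdwc : ∀ x ∈ Icc (0:ℝ) 1, derivWithin c (Icc 0 1) x = σ * Complex.sinh (σ * x) :=
      fun x hx => ((hasDerivAt_coshC σ x).hasDerivWithinAt).derivWithin (hu x hx)
    have hdws : ∀ x ∈ Icc (0:ℝ) 1,
        derivWithin (fun y : ℝ => σ * Complex.sinh (σ * y)) (Icc 0 1) x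
          = σ * (σ * Complex.cosh (σ * x)) :=
      fun x hx => (((hasDerivAt_sinhC σ x).const_mul σ).hasDerivWithinAt).derivWithin (hu x hx)
    have hd2 : ∀ x ∈ Icc (0:ℝ) 1, derivWithin n₂ (Icc 0 1) x
        = derivWithin n (Icc 0 1) x + σ * Complex.sinh (σ * x) := by
      intro x hx
      rw [hn₂def, derivWithin_fun_add (hdn x hx).differentiableWithinAt
        ((hasDerivAt_coshC σ x).hasDerivWithinAt).differentiableWithinAt, hdwc x hx]
    have hode₂ : ∀ x ∈ Icc (0:ℝ) 1,
        derivWithin (derivWithin n₂ (Icc 0 1)) (Icc 0 1) x = σ ^ 2 * n₂ x + 0 := by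
      intro x hx
      rw [derivWithin_congr (fun y hy => hd2 y hy) (hd2 x hx),
        derivWithin_fun_add (hdn' x hx).differentiableWithinAt
          (((hasDerivAt_sinhC σ x).const_mul σ).hasDerivWithinAt).differentiableWithinAt,
        hdws x hx, hode x hx, hn₂def]
      ring
    have h0₂ : derivWithin n₂ (Icc 0 1) 0 = 0 := by
      rw [hd2 0 (left_mem_Icc.mpr zero_le_one), h0]
      simp
    have h1₂ : derivWithin n₂ (Icc 0 1) 1 = 0 := by
      rw [hd2 1 (right_mem_Icc.mpr zero_le_one), h1]
      simp [hs0]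
    have := huniq n₂ (hC.add hcC.contDiffOn) hode₂ h0₂ h1₂ 0 (left_mem_Icc.mpr zero_le_one)
    rw [hn₂def] at this
    simp [hcdef] at this
end

section
/- Let n be a positive integer, M an n × n complex matrix, l ∈ ℂⁿ, and c > 0 a real number. Suppose that for every nonnegative integer j, the complex number j²·π²·i - c is not an eigenvalue of M (equivalently, M - (j²π²i - c)·I is invertible). Then the series ∑_{j=0}^∞ ‖(M - (j²·π²·i - c)·I)⁻¹ · l‖² converges. -/
open Matrix
open scoped Matrix.Norms.L2Operator

private lemma aux_inv_norm_bound (n : ℕ) (M : Matrix (Fin n) (Fin n) ℂ) (lam : ℂ)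
    (hlam : lam ≠ 0) (h : ‖M‖ * 2 ≤ ‖lam‖) :
    ‖(M - lam • 1)⁻¹‖ ≤ (‖(1 : Matrix (Fin n) (Fin n) ℂ)‖ + 1) / ‖lam‖ := by
  haveI : CompleteSpace (Matrix (Fin n) (Fin n) ℂ) := FiniteDimensional.complete ℂ _
  have hl : (0 : ℝ) < ‖lam‖ := norm_pos_iff.mpr hlam
  set t : Matrix (Fin n) (Fin n) ℂ := lam⁻¹ • M with ht_def
  have ht : ‖t‖ ≤ 1 / 2 := by
    rw [ht_def, norm_smul, norm_inv]
    rw [inv_mul_le_iff₀ hl]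
    nlinarith
  have ht1 : ‖t‖ < 1 := lt_of_le_of_lt ht (by norm_num)
  have hneg : (-lam) • t = -M := by
    rw [ht_def, smul_smul, neg_mul, mul_inv_cancel₀ hlam, neg_smul, one_smul]
  have hfact : M - lam • 1 = (-lam) • ((1 : Matrix (Fin n) (Fin n) ℂ) - t) := by
    rw [smul_sub, hneg, sub_neg_eq_add, neg_smul]
    abel
  have hBunit : IsUnit ((1 : Matrix (Fin n) (Fin n) ℂ) - t) :=
    isUnit_one_sub_of_norm_lt_one ht1
  have hBdet : IsUnit ((1 : Matrix (Fin n) (Fin n) ℂ) - t).det :=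
    (Matrix.isUnit_iff_isUnit_det _).1 hBunit
  haveI : Invertible (-lam) := invertibleOfNonzero (neg_ne_zero.mpr hlam)
  have hinv_eq : (M - lam • 1)⁻¹ = (-lam)⁻¹ • ((1 : Matrix (Fin n) (Fin n) ℂ) - t)⁻¹ := by
    have hs := Matrix.inv_smul (A := (1 : Matrix (Fin n) (Fin n) ℂ) - t) (-lam) hBdet
    rw [hfact, hs, invOf_eq_inv]
  have hnormB : ‖((1 : Matrix (Fin n) (Fin n) ℂ) - t)⁻¹‖
      ≤ ‖(1 : Matrix (Fin n) (Fin n) ℂ)‖ + 1 := by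
    rw [Matrix.nonsing_inv_eq_ringInverse, ← geom_series_eq_inverse t ht1]
    have h1 := tsum_geometric_le_of_norm_lt_one t ht1
    have h2 : (1 - ‖t‖)⁻¹ ≤ 2 := by
      rw [inv_le_comm₀ (by linarith) (by norm_num)]
      linarith
    linarith
  have hsmul : ‖(-lam)⁻¹ • ((1 : Matrix (Fin n) (Fin n) ℂ) - t)⁻¹‖
      = ‖lam‖⁻¹ * ‖((1 : Matrix (Fin n) (Fin n) ℂ) - t)⁻¹‖ := by
    rw [norm_smul, norm_inv, norm_neg]
  rw [hinv_eq, hsmul, div_eq_inv_mul]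
  exact mul_le_mul_of_nonneg_left hnormB (by positivity)

set_option maxHeartbeats 1000000 in
/-- The quadratic-closeness estimate (5.25) in the proof of Theorem 5.2: if no
`j²π²i - c` (`j ∈ ℕ`) is an eigenvalue of `M`, then
`∑_j ‖(M - (j²π²i - c)I)⁻¹ l‖²` converges (Euclidean norm on `ℂⁿ`). -/
theorem stmt_18 (n : ℕ) (hn : 0 < n) (M : Matrix (Fin n) (Fin n) ℂ) (l : Fin n → ℂ)
    (c : ℝ) (hc : 0 < c)
    (hinv : ∀ j : ℕ, IsUnit
      (M - ((j : ℂ) ^ 2 * (Real.pi : ℂ) ^ 2 * Complex.I - (c : ℂ)) • 1)) :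
    Summable (fun j : ℕ =>
      ‖(EuclideanSpace.equiv (Fin n) ℂ).symm
          ((M - ((j : ℂ) ^ 2 * (Real.pi : ℂ) ^ 2 * Complex.I - (c : ℂ)) • 1)⁻¹ *ᵥ l)‖ ^ 2) := by
  set K : ℝ := ‖(1 : Matrix (Fin n) (Fin n) ℂ)‖ + 1 with hK
  have hK0 : 0 ≤ K := by positivity
  set L : ℝ := ‖(EuclideanSpace.equiv (Fin n) ℂ).symm l‖ with hL
  have hL0 : 0 ≤ L := norm_nonneg _
  have hπ : (1 : ℝ) ≤ Real.pi := by linarith [Real.pi_gt_three]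
  set N : ℕ := ⌈2 * ‖M‖⌉₊ + 1 with hN
  rw [← summable_nat_add_iff N]
  set C : ℝ := (K * L / Real.pi ^ 2) ^ 2 with hC
  have hsum : Summable (fun k : ℕ => C * (1 / ((k + N : ℕ) : ℝ) ^ 4)) := by
    have hbase : Summable (fun j : ℕ => C * (1 / (j : ℝ) ^ 4)) :=
      (Real.summable_one_div_nat_pow.2 (by norm_num)).mul_left C
    exact hbase.comp_injective (add_left_injective N)
  refine Summable.of_nonneg_of_le (fun k => sq_nonneg _) (fun k => ?_) hsum
  set j : ℕ := k + N with hj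
  set lam : ℂ := (j : ℂ) ^ 2 * (Real.pi : ℂ) ^ 2 * Complex.I - (c : ℂ) with hlam_def
  have hline : lam = Complex.ofReal ((j : ℝ) ^ 2 * Real.pi ^ 2) * Complex.I
      - Complex.ofReal c := by
    rw [hlam_def]; push_cast; ring
  have him : lam.im = (j : ℝ) ^ 2 * Real.pi ^ 2 := by
    rw [hline]
    simp [Complex.mul_im, -Complex.ofReal_mul, -Complex.ofReal_pow]
  have hre : lam.re = -c := by
    rw [hline]
    simp [Complex.mul_re, -Complex.ofReal_mul, -Complex.ofReal_pow]
  have hlam_ne : lam ≠ 0 := by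
    intro h
    rw [h] at hre
    simp at hre
    linarith
  have hjN : (N : ℝ) ≤ (j : ℝ) := by exact_mod_cast Nat.le_add_left N k
  have hj1 : (1 : ℝ) ≤ (j : ℝ) := by
    have : (1 : ℝ) ≤ (N : ℝ) := by exact_mod_cast Nat.one_le_iff_ne_zero.2 (by omega)
    linarith
  have h2M : 2 * ‖M‖ ≤ (j : ℝ) := by
    have h1 : 2 * ‖M‖ ≤ (⌈2 * ‖M‖⌉₊ : ℝ) := Nat.le_ceil _
    have h2 : ((⌈2 * ‖M‖⌉₊ : ℕ) : ℝ) ≤ (N : ℝ) := by exact_mod_cast Nat.le_succ _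
    linarith
  have habs : (j : ℝ) ^ 2 * Real.pi ^ 2 ≤ ‖lam‖ := by
    calc (j : ℝ) ^ 2 * Real.pi ^ 2 = |lam.im| := by
          rw [him, abs_of_nonneg (by positivity)]
      _ ≤ ‖lam‖ := Complex.abs_im_le_norm lam
      _ = ‖lam‖ := rfl
  have hjsq : (j : ℝ) ≤ (j : ℝ) ^ 2 * Real.pi ^ 2 := by
    have ha : (j : ℝ) ≤ (j : ℝ) ^ 2 := by nlinarith
    have hπ2 : (1 : ℝ) ≤ Real.pi ^ 2 := by nlinarith
    have hb : (j : ℝ) ^ 2 ≤ (j : ℝ) ^ 2 * Real.pi ^ 2 :=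
      le_mul_of_one_le_right (sq_nonneg _) hπ2
    linarith
  have hMlam : ‖M‖ * 2 ≤ ‖lam‖ := by linarith
  have hbound := aux_inv_norm_bound n M lam hlam_ne hMlam
  have hmv : ‖(EuclideanSpace.equiv (Fin n) ℂ).symm ((M - lam • 1)⁻¹ *ᵥ l)‖
      ≤ ‖(M - lam • 1)⁻¹‖ * L :=
    Matrix.l2_opNorm_mulVec (M - lam • 1)⁻¹ ((EuclideanSpace.equiv (Fin n) ℂ).symm l)
  have hKL : ‖(M - lam • 1)⁻¹‖ * L ≤ K * L / ((j : ℝ) ^ 2 * Real.pi ^ 2) := by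
    have hpos : (0 : ℝ) < (j : ℝ) ^ 2 * Real.pi ^ 2 := by positivity
    have h1 : K / ‖lam‖ ≤ K / ((j : ℝ) ^ 2 * Real.pi ^ 2) :=
      div_le_div_of_nonneg_left hK0 hpos habs
    calc ‖(M - lam • 1)⁻¹‖ * L ≤ (K / ‖lam‖) * L :=
          mul_le_mul_of_nonneg_right hbound hL0
      _ ≤ (K / ((j : ℝ) ^ 2 * Real.pi ^ 2)) * L :=
          mul_le_mul_of_nonneg_right h1 hL0
      _ = K * L / ((j : ℝ) ^ 2 * Real.pi ^ 2) := by ring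
  have hfinal : ‖(EuclideanSpace.equiv (Fin n) ℂ).symm ((M - lam • 1)⁻¹ *ᵥ l)‖ ^ 2
      ≤ C * (1 / (j : ℝ) ^ 4) := by
    have h1 : ‖(EuclideanSpace.equiv (Fin n) ℂ).symm ((M - lam • 1)⁻¹ *ᵥ l)‖ ^ 2
        ≤ (K * L / ((j : ℝ) ^ 2 * Real.pi ^ 2)) ^ 2 :=
      pow_le_pow_left₀ (norm_nonneg _) (le_trans hmv hKL) 2
    have h2 : (K * L / ((j : ℝ) ^ 2 * Real.pi ^ 2)) ^ 2 = C * (1 / (j : ℝ) ^ 4) := by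
      have e1 : K * L / ((j : ℝ) ^ 2 * Real.pi ^ 2)
          = (K * L / Real.pi ^ 2) / (j : ℝ) ^ 2 := by
        ring
      rw [e1, div_pow, hC, ← pow_mul]
      norm_num
      ring
    linarith [h1, h2.le]
  exact hfinal
end

section
/- Let n be a positive integer, S an n × n complex matrix, c ∈ ℝ, and p₁, p₂ ∈ ℂⁿ. Let G₁, G₂ : [0,1] → ℂ be continuous. Let m : [0,1] → ℂⁿ be twice continuously differentiable and satisfy, for all x ∈ [0,1], i·m''(x) + Sᵀ·m(x) + c·m(x) = G₁(x)·p₁ - G₂(x)·p₂, together with m'(0) = p₂. Let w : [0,∞) → ℂⁿ be differentiable with ẇ(t) = S·w(t) for all t ≥ 0. Let v : [0,1] × [0,∞) → ℂ be a classical solution, meaning v is continuous and the partial derivatives v_t, v_x, v_xx exist and are continuous on [0,1] × [0,∞), satisfying v_t(x,t) = -i·v_xx(x,t) - c·v(x,t) + G₁(x)·(p₁ᵀw(t)) - G₂(x)·(p₂ᵀw(t)), v_x(0,t) = p₂ᵀw(t), and v_x(1,t) = m'(1)ᵀw(t) for all x ∈ [0,1], t ≥ 0. Then the function ṽ(x,t)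 = v(x,t) - m(x)ᵀw(t) satisfies ṽ_t(x,t) = -i·ṽ_xx(x,t) - c·ṽ(x,t), ṽ_x(0,t) = 0, and ṽ_x(1,t) = 0 for all x ∈ [0,1], t ≥ 0. -/
open Matrix

lemma dot_const_deriv {n : ℕ} {f : ℝ → Fin n → ℂ} {f' : Fin n → ℂ} {s : Set ℝ} {x : ℝ}
    (hf : HasDerivWithinAt f f' s x) (a : Fin n → ℂ) :
    HasDerivWithinAt (fun y => f y ⬝ᵥ a) (f' ⬝ᵥ a) s x := by
  simp only [dotProduct]
  exact HasDerivWithinAt.fun_sum fun i _ => (hasDerivWithinAt_pi.mp hf i).mul_const (a i)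

lemma const_dot_deriv {n : ℕ} {f : ℝ → Fin n → ℂ} {f' : Fin n → ℂ} {s : Set ℝ} {x : ℝ}
    (hf : HasDerivWithinAt f f' s x) (a : Fin n → ℂ) :
    HasDerivWithinAt (fun y => a ⬝ᵥ f y) (a ⬝ᵥ f') s x := by
  simp only [dotProduct]
  exact HasDerivWithinAt.fun_sum fun i _ => (hasDerivWithinAt_pi.mp hf i).const_mul (a i)


/-- The error-transformation computation (4.10)–(4.13): if `m` solves the regulator
equations `i m'' + Sᵀ m + c m = G₁ p₁ - G₂ p₂`, `m'(0) = p₂`, `ẇ = S w`, and `v` is a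
classical solution of the backstepped closed-loop system, then `ṽ(x,t) = v(x,t) - m(x)ᵀw(t)`
satisfies the target system `ṽ_t = -i ṽ_xx - c ṽ` with `ṽ_x(0,t) = ṽ_x(1,t) = 0`. -/
theorem stmt_19 (n : ℕ) (hn : 0 < n) (S : Matrix (Fin n) (Fin n) ℂ) (c : ℝ)
    (p₁ p₂ : Fin n → ℂ) (G₁ G₂ : ℝ → ℂ)
    (hG₁ : ContinuousOn G₁ (Set.Icc 0 1)) (hG₂ : ContinuousOn G₂ (Set.Icc 0 1))
    (m : ℝ → (Fin n → ℂ)) (hm : ContDiffOn ℝ 2 m (Set.Icc 0 1))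
    (hmode : ∀ x ∈ Set.Icc (0:ℝ) 1,
      Complex.I • derivWithin (derivWithin m (Set.Icc 0 1)) (Set.Icc 0 1) x
          + Sᵀ *ᵥ m x + (c : ℂ) • m x
        = G₁ x • p₁ - G₂ x • p₂)
    (hm0 : derivWithin m (Set.Icc 0 1) 0 = p₂)
    (w : ℝ → (Fin n → ℂ))
    (hw : ∀ t ∈ Set.Ici (0:ℝ), HasDerivWithinAt w (S *ᵥ w t) (Set.Ici 0) t)
    (v vx vxx vt : ℝ → ℝ → ℂ)
    (hv : ContinuousOn (fun p : ℝ × ℝ => v p.1 p.2) (Set.Icc 0 1 ×ˢ Set.Ici 0))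
    (hvx : ContinuousOn (fun p : ℝ × ℝ => vx p.1 p.2) (Set.Icc 0 1 ×ˢ Set.Ici 0))
    (hvxx : ContinuousOn (fun p : ℝ × ℝ => vxx p.1 p.2) (Set.Icc 0 1 ×ˢ Set.Ici 0))
    (hvt : ContinuousOn (fun p : ℝ × ℝ => vt p.1 p.2) (Set.Icc 0 1 ×ˢ Set.Ici 0))
    (hdx : ∀ x ∈ Set.Icc (0:ℝ) 1, ∀ t ∈ Set.Ici (0:ℝ),
      HasDerivWithinAt (fun y => v y t) (vx x t) (Set.Icc 0 1) x)
    (hdxx : ∀ x ∈ Set.Icc (0:ℝ) 1, ∀ t ∈ Set.Ici (0:ℝ),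
      HasDerivWithinAt (fun y => vx y t) (vxx x t) (Set.Icc 0 1) x)
    (hdt : ∀ x ∈ Set.Icc (0:ℝ) 1, ∀ t ∈ Set.Ici (0:ℝ),
      HasDerivWithinAt (fun τ => v x τ) (vt x t) (Set.Ici 0) t)
    (hpde : ∀ x ∈ Set.Icc (0:ℝ) 1, ∀ t ∈ Set.Ici (0:ℝ),
      vt x t = -Complex.I * vxx x t - (c : ℂ) * v x t
        + G₁ x * (p₁ ⬝ᵥ w t) - G₂ x * (p₂ ⬝ᵥ w t))
    (hbc0 : ∀ t ∈ Set.Ici (0:ℝ), vx 0 t = p₂ ⬝ᵥ w t)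
    (hbc1 : ∀ t ∈ Set.Ici (0:ℝ), vx 1 t = (derivWithin m (Set.Icc 0 1) 1) ⬝ᵥ w t) :
    ∃ Vt Vx Vxx : ℝ → ℝ → ℂ,
      (∀ x ∈ Set.Icc (0:ℝ) 1, ∀ t ∈ Set.Ici (0:ℝ),
        HasDerivWithinAt (fun y => v y t - (m y) ⬝ᵥ (w t)) (Vx x t) (Set.Icc 0 1) x
        ∧ HasDerivWithinAt (fun y => Vx y t) (Vxx x t) (Set.Icc 0 1) x
        ∧ HasDerivWithinAt (fun τ => v x τ - (m x) ⬝ᵥ (w τ)) (Vt x t) (Set.Ici 0) t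
        ∧ Vt x t = -Complex.I * Vxx x t - (c : ℂ) * (v x t - (m x) ⬝ᵥ (w t)))
      ∧ (∀ t ∈ Set.Ici (0:ℝ), Vx 0 t = 0 ∧ Vx 1 t = 0) := by

  set s := Set.Icc (0:ℝ) 1
  set m' := derivWithin m s
  set m'' := derivWithin m' s
  have hus : UniqueDiffOn ℝ s := uniqueDiffOn_Icc one_pos
  have hm1 : ∀ x ∈ s, HasDerivWithinAt m (m' x) s x := fun x hx =>
    ((hm.differentiableOn (by norm_num)) x hx).hasDerivWithinAt
  have hm'cd : ContDiffOn ℝ 1 m' s := hm.derivWithin hus (by norm_num)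
  have hm2 : ∀ x ∈ s, HasDerivWithinAt m' (m'' x) s x := fun x hx =>
    ((hm'cd.differentiableOn (by norm_num)) x hx).hasDerivWithinAt
  refine ⟨fun x t => vt x t - (m x) ⬝ᵥ (S *ᵥ w t),
    fun x t => vx x t - (m' x) ⬝ᵥ (w t),
    fun x t => vxx x t - (m'' x) ⬝ᵥ (w t), ?_, ?_⟩
  · intro x hx t ht
    refine ⟨(hdx x hx t ht).sub (dot_const_deriv (hm1 x hx) (w t)),
      (hdxx x hx t ht).sub (dot_const_deriv (hm2 x hx) (w t)),
      (hdt x hx t ht).sub (const_dot_deriv (hw t ht) (m x)), ?_⟩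
    have hmw : (Complex.I • m'' x + Sᵀ *ᵥ m x + (c : ℂ) • m x) ⬝ᵥ w t
        = (G₁ x • p₁ - G₂ x • p₂) ⬝ᵥ w t := by rw [hmode x hx]
    have hS : (Sᵀ *ᵥ m x) ⬝ᵥ w t = m x ⬝ᵥ (S *ᵥ w t) := by
      rw [Matrix.mulVec_transpose, Matrix.dotProduct_mulVec]
    simp only [add_dotProduct, sub_dotProduct, smul_dotProduct,
      smul_eq_mul, hS] at hmw
    dsimp only
    rw [hpde x hx t ht]
    linear_combination -hmw
  · intro t ht
    constructor
    · dsimp only; rw [hbc0 t ht, hm0]; ring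
    · dsimp only; rw [hbc1 t ht]; ring
end
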